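/- arXiv:2411.02881 — 11 statements merged into one kernel-verified Lean document; each statement's English description precedes it below -/
import Mathlib

section
/- Let N be a natural number and let A_N be the (N+1)×(N+1) complex clock matrix with entries (A_N)_{j,j-1} = (A_N)_{j-1,j} = √(j(N−j+1)) for 1 ≤ j ≤ N and all other entries zero. Then the matrix exponential exp(−i(π/2)·A_N) maps the first standard basis vector e_0 of ℂ^{N+1} to (−i)^N · e_N, where e_N is the last standard basis vector; i.e., exp(−i(π/2)·A_N) e_0 = (−i)^N e_N. -/
/-!
The amplitudes `vₙ(t) = √(N choose n) cosᴺ⁻ⁿ t (-i sin t)ⁿ` solve the Schrödinger equation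
`v' = -i A_N v` with `v(0) = e₀`: with `cₙ = √(n (N + 1 - n))` the entries of `A_N`, this comes down
to the binomial identities `cₙ₊₁ √(N choose n) = (n + 1) √(N choose n+1)` and
`cₙ₊₁ √(N choose n+1) = (N - n) √(N choose n)`. A solution of a linear equation `V' = M V` in a
Banach algebra is `exp(tM) V(0)`, because `s ↦ exp((t - s) M) V(s)` has derivative zero.
At `t = π/2` the cosine vanishes and only `v_N = (-i)ᴺ` survives.
-/

open Matrix

/-- The `(N+1) × (N+1)` clock matrix with entries `(A_N)_{j,j-1} = (A_N)_{j-1,j} =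
`√(j(N−j+1))` for `1 ≤ j ≤ N` (here indexed by `j : Fin N`, representing `j+1`). -/
noncomputable def clockMatrix (N : ℕ) : Matrix (Fin (N + 1)) (Fin (N + 1)) ℂ :=
  ∑ j : Fin N, (Real.sqrt ((((j : ℕ) + 1) * (N - (j : ℕ)) : ℕ)) : ℂ) •
    (Matrix.single j.succ j.castSucc (1 : ℂ) +
      Matrix.single j.castSucc j.succ (1 : ℂ))

theorem eq_exp_smul_mul_of_hasDerivAt {𝕂 𝔸 : Type*} [RCLike 𝕂] [NormedRing 𝔸]
    [NormedAlgebra 𝕂 𝔸] [CompleteSpace 𝔸] {M : 𝔸} {V : 𝕂 → 𝔸}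
    (hV : ∀ t, HasDerivAt V (M * V t) t) (t : 𝕂) :
    V t = NormedSpace.exp (t • M) * V 0 := by
  have hG (s : 𝕂) : HasDerivAt (fun s => NormedSpace.exp ((t - s) • M) * V s) 0 s := by
    have hE := (hasDerivAt_exp_smul_const M (t - s)).scomp s ((hasDerivAt_id s).const_sub t)
    refine (hE.mul (hV s)).congr_deriv ?_
    rw [neg_one_smul, neg_mul, Function.comp_apply, mul_assoc, neg_add_cancel]
  simpa using
    is_const_of_deriv_eq_zero (fun s => (hG s).differentiableAt) (fun s => (hG s).deriv) t 0

section LinftyOpNorm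

/- Any submultiplicative norm would do here; the `ℓ∞` operator norm induces the product topology
definitionally, so the conclusion is about the usual matrix exponential. -/
attribute [local instance] Matrix.linftyOpNormedAddCommGroup Matrix.linftyOpNormedSpace
  Matrix.linftyOpNormedRing Matrix.linftyOpNormedAlgebra

theorem Matrix.exp_smul_mulVec_eq_of_hasDerivAt {𝕂 𝕜 n : Type*} [RCLike 𝕂] [RCLike 𝕜]
    [NormedAlgebra 𝕂 𝕜] [Fintype n] [DecidableEq n] {M : Matrix n n 𝕜} {v : 𝕂 → n → 𝕜}
    (hv : ∀ t i, HasDerivAt (fun s => v s i) ((M *ᵥ v t) i) t) (t : 𝕂) :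
    NormedSpace.exp (t • M) *ᵥ v 0 = v t := by
  have hcol (w : n → 𝕜) : replicateCol n w = ∑ k, w k • replicateCol n (Pi.single k 1) := by
    ext i j
    simp [replicateCol_apply, Matrix.sum_apply, Pi.single_apply]
  have hV (s : 𝕂) :
      HasDerivAt (fun s => replicateCol n (v s)) (M * replicateCol n (v s)) s := by
    rw [← replicateCol_mulVec, hcol]
    simp_rw [hcol (v _)]
    exact HasDerivAt.fun_sum fun k _ => (hv s k).smul_const _
  ext i
  have := congr_fun (congr_fun (eq_exp_smul_mul_of_hasDerivAt hV t) i) i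
  rw [← replicateCol_mulVec] at this
  exact this.symm

end LinftyOpNorm

/-- The entry `(A_N)_{n,n-1}`. The truncated subtraction makes it vanish at `n = N + 1` as well as
at `n = 0`, which takes care of the first and last rows of `A_N`. -/
noncomputable def clockCoeff (N n : ℕ) : ℝ := √((n * (N + 1 - n) : ℕ) : ℝ)

theorem clockCoeff_zero (N : ℕ) : clockCoeff N 0 = 0 := by simp [clockCoeff]

theorem clockCoeff_self_add_one (N : ℕ) : clockCoeff N (N + 1) = 0 := by simp [clockCoeff]

theorem clockCoeff_mul_sqrt_choose (N n : ℕ) :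
    clockCoeff N (n + 1) * √(N.choose n) = (n + 1) * √(N.choose (n + 1)) := by
  have h : (n + 1) * (N - n) * N.choose n = (n + 1) ^ 2 * N.choose (n + 1) := by
    rw [mul_assoc, mul_comm (N - n), ← Nat.choose_succ_right_eq]
    ring
  rw [clockCoeff, Nat.add_sub_add_right, ← Real.sqrt_mul (Nat.cast_nonneg _), ← Nat.cast_mul, h]
  push_cast
  rw [Real.sqrt_mul (by positivity), Real.sqrt_sq (by positivity)]

theorem clockCoeff_mul_sqrt_choose_succ (N n : ℕ) :
    clockCoeff N (n + 1) * √(N.choose (n + 1)) = (N - n : ℕ) * √(N.choose n) := by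
  have h : (n + 1) * (N - n) * N.choose (n + 1) = (N - n) ^ 2 * N.choose n := by
    rw [mul_comm (n + 1), mul_assoc, mul_comm (n + 1), Nat.choose_succ_right_eq]
    ring
  rw [clockCoeff, Nat.add_sub_add_right, ← Real.sqrt_mul (Nat.cast_nonneg _), ← Nat.cast_mul, h]
  push_cast
  rw [Real.sqrt_mul (by positivity), Real.sqrt_sq (by positivity)]

theorem clockMatrix_mulVec_apply (N : ℕ) (u : ℕ → ℂ) (k : Fin (N + 1)) :
    (clockMatrix N *ᵥ fun j => u j) k =
      clockCoeff N k * u (k - 1) + clockCoeff N (k + 1) * u (k + 1) := by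
  have hcoeff (j : ℕ) : √(((j + 1) * (N - j) : ℕ) : ℝ) = clockCoeff N (j + 1) := by
    rw [clockCoeff, Nat.add_sub_add_right]
  simp only [clockMatrix, sum_mulVec, smul_mulVec, add_mulVec, single_mulVec, Finset.sum_apply,
    Pi.smul_apply, Pi.add_apply, Function.update_apply, Pi.zero_apply, Fin.ext_iff, Fin.val_succ,
    Fin.val_castSucc, smul_eq_mul, one_mul, hcoeff, mul_add, Finset.sum_add_distrib, mul_ite,
    mul_zero]
  rw [Fin.sum_univ_eq_sum_range
      (fun j => if (k : ℕ) = j + 1 then (clockCoeff N (j + 1) : ℂ) * u j else 0),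
    Fin.sum_univ_eq_sum_range
      (fun j => if (k : ℕ) = j then (clockCoeff N (j + 1) : ℂ) * u (j + 1) else 0)]
  obtain ⟨k, hk⟩ := k
  congr 1
  · cases k with
    | zero => simp [clockCoeff_zero]
    | succ m => simp [Finset.sum_ite_eq, show m < N by omega]
  · rcases (Nat.lt_succ_iff.mp hk).lt_or_eq with hk | rfl
    · simp [Finset.sum_ite_eq, hk]
    · simp [Finset.sum_ite_eq, clockCoeff_self_add_one]

section ClockAmplitude

open Complex

noncomputable def clockAmplitude (N : ℕ) (t : ℝ) (n : ℕ) : ℂ :=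
  √(N.choose n) * cos t ^ (N - n) * (-I * sin t) ^ n

theorem clockCoeff_mul_clockAmplitude_pred {N n : ℕ} (hn : n ≤ N) (t : ℝ) :
    clockCoeff N n * clockAmplitude N t (n - 1) =
      n * √(N.choose n) * cos t ^ (N - n + 1) * (-I * sin t) ^ (n - 1) := by
  cases n with
  | zero => simp [clockCoeff_zero]
  | succ m =>
    have h := congr_arg (fun x : ℝ => (x : ℂ)) (clockCoeff_mul_sqrt_choose N m)
    push_cast at h
    rw [clockAmplitude, Nat.add_sub_cancel, show N - (m + 1) + 1 = N - m by omega]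
    push_cast
    linear_combination cos t ^ (N - m) * (-I * sin t) ^ m * h

theorem clockCoeff_mul_clockAmplitude_succ (N n : ℕ) (t : ℝ) :
    clockCoeff N (n + 1) * clockAmplitude N t (n + 1) =
      (N - n : ℕ) * √(N.choose n) * cos t ^ (N - n - 1) * (-I * sin t) ^ (n + 1) := by
  have h := congr_arg (fun x : ℝ => (x : ℂ)) (clockCoeff_mul_sqrt_choose_succ N n)
  push_cast at h
  rw [clockAmplitude, Nat.sub_add_eq]
  linear_combination cos t ^ (N - n - 1) * (-I * sin t) ^ (n + 1) * h

theorem hasDerivAt_clockAmplitude {N n : ℕ} (hn : n ≤ N) (t : ℝ) :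
    HasDerivAt (fun s => clockAmplitude N s n)
      (-I * (clockCoeff N n * clockAmplitude N t (n - 1) +
        clockCoeff N (n + 1) * clockAmplitude N t (n + 1))) t := by
  have hcos : HasDerivAt (fun s : ℝ => cos s) (-sin t) t := (hasDerivAt_cos t).comp_ofReal
  have hsin : HasDerivAt (fun s : ℝ => -I * sin s) (-I * cos t) t :=
    ((hasDerivAt_sin t).comp_ofReal).const_mul _
  refine (((hcos.fun_pow (N - n)).const_mul (√(N.choose n) : ℂ)).mul
    (hsin.fun_pow n)).congr_deriv ?_
  rw [clockCoeff_mul_clockAmplitude_pred hn, clockCoeff_mul_clockAmplitude_succ,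
    pow_succ (cos t) (N - n), pow_succ (-I * sin t) n, Nat.cast_sub hn]
  linear_combination
    (n - (N : ℂ)) * √(N.choose n) * cos t ^ (N - n - 1) * (-I * sin t) ^ n * sin t * I_mul_I

theorem hasDerivAt_clockAmplitude_mulVec (N : ℕ) (t : ℝ) (k : Fin (N + 1)) :
    HasDerivAt (fun s => clockAmplitude N s k)
      ((((-I) • clockMatrix N) *ᵥ fun j : Fin (N + 1) => clockAmplitude N t j) k) t := by
  rw [smul_mulVec, Pi.smul_apply, clockMatrix_mulVec_apply, smul_eq_mul]
  exact hasDerivAt_clockAmplitude k.is_le t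

theorem clockAmplitude_zero (N : ℕ) :
    (fun k : Fin (N + 1) => clockAmplitude N 0 k) = Pi.single 0 1 := by
  ext ⟨_ | k, hk⟩ <;> simp [clockAmplitude, Fin.ext_iff]

theorem clockAmplitude_pi_div_two (N : ℕ) :
    (fun k : Fin (N + 1) => clockAmplitude N (Real.pi / 2) k) =
      (-I) ^ N • Pi.single (Fin.last N) 1 := by
  ext ⟨k, hk⟩
  rcases (Nat.lt_succ_iff.mp hk).lt_or_eq with hk | rfl
  · simp [clockAmplitude, Fin.ext_iff, hk.ne, Nat.sub_ne_zero_of_lt hk]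
  · simp [clockAmplitude, Pi.single_apply, Fin.ext_iff]

end ClockAmplitude

/-- `exp(−i(π/2)·A_N)` maps the first standard basis vector `e₀` of `ℂ^{N+1}` to
`(−i)^N · e_N`, where `e_N` is the last standard basis vector. -/
theorem clock_exp_perfect_transfer (N : ℕ) :
    (NormedSpace.exp ((-Complex.I * ((Real.pi / 2 : ℝ) : ℂ)) • clockMatrix N)) *ᵥ
        (Pi.single (0 : Fin (N + 1)) 1) =
      (-Complex.I) ^ N • (Pi.single (Fin.last N) 1 : Fin (N + 1) → ℂ) := by
  have hsmul : (-Complex.I * ((Real.pi / 2 : ℝ) : ℂ)) • clockMatrix N =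
      (Real.pi / 2 : ℝ) • ((-Complex.I) • clockMatrix N) := by
    rw [mul_comm, ← smul_smul, Complex.coe_smul]
  rw [hsmul, ← clockAmplitude_zero, ← clockAmplitude_pi_div_two]
  exact exp_smul_mulVec_eq_of_hasDerivAt (hasDerivAt_clockAmplitude_mulVec N) _
end

section
/- Let N, d be natural numbers, U_1, …, U_N unitary d×d complex matrices, H_U the associated Feynman clock Hamiltonian on ℂ^{N+1} ⊗ ℂ^d, and A_N the (N+1)×(N+1) clock matrix. Define V = Σ_{j=0}^{N} E_{j,j} ⊗ (U_j ⋯ U_1), where the empty product (j = 0) is the identity on ℂ^d. Then V is unitary and V (A_N ⊗ I_d) V† = H_U. -/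
open Matrix Kronecker

/-- The Feynman clock Hamiltonian `H_U = Σ_{j=1}^{N} √(j(N−j+1)) (E_{j,j-1} ⊗ U_j +
E_{j-1,j} ⊗ U_j†)` on `ℂ^{N+1} ⊗ ℂ^d`. -/
noncomputable def clockHam (N d : ℕ) (U : Fin N → Matrix (Fin d) (Fin d) ℂ) :
    Matrix (Fin (N + 1) × Fin d) (Fin (N + 1) × Fin d) ℂ :=
  ∑ j : Fin N, (Real.sqrt ((((j : ℕ) + 1) * (N - (j : ℕ)) : ℕ)) : ℂ) •
    ((Matrix.single j.succ j.castSucc (1 : ℂ)) ⊗ₖ U j +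
      (Matrix.single j.castSucc j.succ (1 : ℂ)) ⊗ₖ (U j)ᴴ)

/-- `V = Σ_{j=0}^{N} E_{j,j} ⊗ (U_j ⋯ U_1)`, where the empty product (`j = 0`) is the
identity on `ℂ^d`. -/
noncomputable def prefixProdV (N d : ℕ) (U : Fin N → Matrix (Fin d) (Fin d) ℂ) :
    Matrix (Fin (N + 1) × Fin d) (Fin (N + 1) × Fin d) ℂ :=
  ∑ j : Fin (N + 1),
    (Matrix.single j j (1 : ℂ)) ⊗ₖ ((List.ofFn U).take (j : ℕ)).reverse.prod

/-! `V` is block diagonal with the unitary blocks `P_j = U_j ⋯ U_1`, hence unitary, and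
conjugation by it sends `E_{a,b} ⊗ M` to `E_{a,b} ⊗ P_a M P_b†`. On the clock terms this gives
`P_{j+1} P_j† = U_{j+1}` and `P_j P_{j+1}† = U_{j+1}†`, because `P_{j+1} = U_{j+1} P_j`. -/

section PrefixProd

variable {M : Type*} [Monoid M] {N : ℕ} (U : Fin N → M)

def prefixProd (k : ℕ) : M :=
  ((List.ofFn U).take k).reverse.prod

theorem prefixProd_succ (j : Fin N) : prefixProd U (j + 1) = U j * prefixProd U j := by
  simp [prefixProd, List.take_add_one]

theorem prefixProd_mem {S : Submonoid M} (hU : ∀ j, U j ∈ S) (k : ℕ) : prefixProd U k ∈ S := by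
  refine S.list_prod_mem fun x hx => ?_
  obtain ⟨j, rfl⟩ := List.mem_ofFn.mp (List.mem_of_mem_take (List.mem_reverse.mp hx))
  exact hU j

end PrefixProd

theorem Matrix.sum_kronecker {ι l m n p R : Type*} [NonUnitalNonAssocSemiring R]
    (s : Finset ι) (A : ι → Matrix l m R) (B : Matrix n p R) :
    (∑ i ∈ s, A i) ⊗ₖ B = ∑ i ∈ s, A i ⊗ₖ B := by
  ext
  simp [Matrix.sum_apply, Finset.sum_mul]

section KroneckerDiagonal

variable {ι l m n R : Type*} [Fintype ι] [DecidableEq ι] [CommSemiring R]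

/-- `Matrix.blockDiagonal` with the block index as the first factor of the product index. -/
def kroneckerDiagonal (P : ι → Matrix m n R) : Matrix (ι × m) (ι × n) R :=
  ∑ i, single i i 1 ⊗ₖ P i

theorem kroneckerDiagonal_mul_single_kronecker [Fintype n] (P : ι → Matrix m n R) (a b : ι)
    (B : Matrix n l R) :
    kroneckerDiagonal P * (single a b 1 ⊗ₖ B) = single a b 1 ⊗ₖ (P a * B) := by
  rw [kroneckerDiagonal, Matrix.sum_mul, Finset.sum_eq_single a]
  · rw [← mul_kronecker_mul, single_mul_single_same, one_mul]
  · intro i _ hi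
    rw [← mul_kronecker_mul, single_mul_single_of_ne (h := hi), zero_kronecker]
  · simp

theorem single_kronecker_mul_kroneckerDiagonal [Fintype m] (a b : ι) (B : Matrix l m R)
    (P : ι → Matrix m n R) :
    (single a b 1 ⊗ₖ B) * kroneckerDiagonal P = single a b 1 ⊗ₖ (B * P b) := by
  rw [kroneckerDiagonal, Matrix.mul_sum, Finset.sum_eq_single b]
  · rw [← mul_kronecker_mul, single_mul_single_same, mul_one]
  · intro i _ hi
    rw [← mul_kronecker_mul, single_mul_single_of_ne (h := hi.symm), zero_kronecker]
  · simp

theorem kroneckerDiagonal_mul [Fintype n] (P : ι → Matrix m n R) (Q : ι → Matrix n l R) :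
    kroneckerDiagonal P * kroneckerDiagonal Q = kroneckerDiagonal fun i => P i * Q i := by
  rw [kroneckerDiagonal.eq_1 Q, Matrix.mul_sum]
  simp only [kroneckerDiagonal_mul_single_kronecker]
  rfl

theorem kroneckerDiagonal_one [Fintype m] [DecidableEq m] :
    kroneckerDiagonal (fun _ : ι => (1 : Matrix m m R)) = 1 := by
  rw [kroneckerDiagonal, ← sum_kronecker, sum_single_one, one_kronecker_one]

theorem conjTranspose_kroneckerDiagonal [StarRing R] (P : ι → Matrix m n R) :
    (kroneckerDiagonal P)ᴴ = kroneckerDiagonal fun i => (P i)ᴴ := by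
  simp only [kroneckerDiagonal, conjTranspose_sum, conjTranspose_kronecker, conjTranspose_single,
    star_one]

theorem kroneckerDiagonal_conj_single_kronecker [Fintype m] [Fintype n] [StarRing R]
    (P : ι → Matrix m n R) (a b : ι) (B : Matrix n n R) :
    kroneckerDiagonal P * (single a b 1 ⊗ₖ B) * (kroneckerDiagonal P)ᴴ =
      single a b 1 ⊗ₖ (P a * B * (P b)ᴴ) := by
  rw [kroneckerDiagonal_mul_single_kronecker, conjTranspose_kroneckerDiagonal,
    single_kronecker_mul_kroneckerDiagonal]

theorem kroneckerDiagonal_mem_unitary [Fintype m] [DecidableEq m] [StarRing R]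
    {P : ι → Matrix m m R} (hP : ∀ i, P i ∈ unitary (Matrix m m R)) :
    kroneckerDiagonal P ∈ unitary (Matrix (ι × m) (ι × m) R) := by
  have star_mul_self : (fun i => (P i)ᴴ * P i) = fun _ => 1 :=
    funext fun i => Unitary.star_mul_self_of_mem (hP i)
  have mul_star_self : (fun i => P i * (P i)ᴴ) = fun _ => 1 :=
    funext fun i => Unitary.mul_star_self_of_mem (hP i)
  simp only [Unitary.mem_iff, star_eq_conjTranspose, conjTranspose_kroneckerDiagonal,
    kroneckerDiagonal_mul, star_mul_self, mul_star_self, kroneckerDiagonal_one, and_self]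

end KroneckerDiagonal

/-- `V` is unitary and conjugating `A_N ⊗ I_d` by `V` yields the Feynman clock
Hamiltonian: `V (A_N ⊗ I_d) V† = H_U`. -/
theorem clock_conjugation (N d : ℕ) (U : Fin N → Matrix (Fin d) (Fin d) ℂ)
    (hU : ∀ j, U j ∈ Matrix.unitaryGroup (Fin d) ℂ) :
    prefixProdV N d U ∈ Matrix.unitaryGroup (Fin (N + 1) × Fin d) ℂ ∧
      prefixProdV N d U * ((clockMatrix N) ⊗ₖ (1 : Matrix (Fin d) (Fin d) ℂ)) *
          (prefixProdV N d U)ᴴ = clockHam N d U := by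
  have hV : prefixProdV N d U = kroneckerDiagonal fun j : Fin (N + 1) => prefixProd U j := rfl
  have hP (k : ℕ) : prefixProd U k * (prefixProd U k)ᴴ = 1 :=
    Unitary.mul_star_self_of_mem (prefixProd_mem U hU k)
  have raise (j : Fin N) : prefixProdV N d U * (single j.succ j.castSucc 1 ⊗ₖ 1) *
      (prefixProdV N d U)ᴴ = single j.succ j.castSucc 1 ⊗ₖ U j := by
    rw [hV, kroneckerDiagonal_conj_single_kronecker, mul_one, Fin.val_succ, Fin.val_castSucc,
      prefixProd_succ, mul_assoc, hP, mul_one]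
  have lower (j : Fin N) : prefixProdV N d U * (single j.castSucc j.succ 1 ⊗ₖ 1) *
      (prefixProdV N d U)ᴴ = single j.castSucc j.succ 1 ⊗ₖ (U j)ᴴ := by
    rw [hV, kroneckerDiagonal_conj_single_kronecker, mul_one, Fin.val_succ, Fin.val_castSucc,
      prefixProd_succ, conjTranspose_mul, ← mul_assoc, hP, one_mul]
  refine ⟨hV ▸ kroneckerDiagonal_mem_unitary fun j => prefixProd_mem U hU j, ?_⟩
  simp only [clockMatrix, clockHam, sum_kronecker, smul_kronecker, add_kronecker, Finset.mul_sum,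
    Finset.sum_mul, mul_smul_comm, smul_mul_assoc, mul_add, add_mul, raise, lower]
end

section
/- Let N, d be natural numbers and U_1, …, U_N unitary d×d complex matrices. The operator norm of the Feynman clock Hamiltonian H_U on ℂ^{N+1} ⊗ ℂ^d equals N. -/
open Matrix Kronecker

/-- The spectral (ℓ²-operator) norm of a complex matrix. -/
noncomputable def l2OpNorm {n : Type*} [Fintype n] [DecidableEq n]
    (A : Matrix n n ℂ) : ℝ :=
  ‖Matrix.toEuclideanCLM (𝕜 := ℂ) A‖

/-!
Index the unitaries as `U_0, …, U_{N-1}` and write `x_i ∈ ℂ^d` for the clock components of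
`x ∈ ℂ^{N+1} ⊗ ℂ^d`. The quadratic form of `H_U` is
`⟪x, H_U x⟫ = Σ_j 2 √((j+1)(N-j)) Re ⟪x_{j+1}, U_j x_j⟫`. It is real, so `H_U` is self-adjoint and
its norm is the supremum of `|⟪x, H_U x⟫| / ‖x‖²`. Cauchy–Schwarz, unitarity of `U_j` and AM–GM
bound the `j`-th term by `(j+1) ‖x_{j+1}‖² + (N-j) ‖x_j‖²`, and these weights add up to `N ‖x‖²`.
Equality holds for the history state `x_i = √(N choose i) U_{i-1} ⋯ U_0 e` of a unit vector `e`,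
because `(j+1) (N choose j+1) = (N-j) (N choose j)`.
-/

open scoped InnerProductSpace

namespace ContinuousLinearMap

variable {𝕜 E : Type*} [RCLike 𝕜] [NormedAddCommGroup E] [InnerProductSpace 𝕜 E]

theorem norm_le_of_abs_reApplyInnerSelf_le {T : E →L[𝕜] E} (hT : T.IsSymmetric) {C : ℝ}
    (hC : 0 ≤ C) (h : ∀ x, |T.reApplyInnerSelf x| ≤ C * ‖x‖ ^ 2) : ‖T‖ ≤ C := by
  rw [T.norm_eq_iSup_rayleighQuotient hT]
  refine ciSup_le fun x => ?_
  rcases eq_or_ne x 0 with rfl | hx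
  · simpa using hC
  · rw [abs_div, abs_sq, div_le_iff₀ (by positivity)]
    exact h x

theorem abs_le_norm_of_reApplyInnerSelf_eq (T : E →L[𝕜] E) {x : E} (hx : x ≠ 0) {c : ℝ}
    (h : T.reApplyInnerSelf x = c * ‖x‖ ^ 2) : |c| ≤ ‖T‖ := by
  have := T.rayleighQuotient_le_norm x
  rwa [rayleighQuotient, h, mul_div_assoc, div_self (by positivity), mul_one] at this

end ContinuousLinearMap

namespace EuclideanSpace

variable {𝕜 ι κ : Type*}

def block (x : EuclideanSpace 𝕜 (ι × κ)) (i : ι) : EuclideanSpace 𝕜 κ :=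
  WithLp.toLp 2 fun a => x (i, a)

def ofBlocks (v : ι → EuclideanSpace 𝕜 κ) : EuclideanSpace 𝕜 (ι × κ) :=
  WithLp.toLp 2 fun p => v p.1 p.2

@[simp]
theorem block_ofBlocks (v : ι → EuclideanSpace 𝕜 κ) (i : ι) : block (ofBlocks v) i = v i := rfl

theorem norm_sq_eq_sum_norm_block_sq [RCLike 𝕜] [Fintype ι] [Fintype κ]
    (x : EuclideanSpace 𝕜 (ι × κ)) :
    ‖x‖ ^ 2 = ∑ i, ‖block x i‖ ^ 2 := by
  simp only [EuclideanSpace.norm_sq_eq, Fintype.sum_prod_type, block]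

end EuclideanSpace

open EuclideanSpace

theorem inner_toEuclideanCLM_single_kronecker {𝕜 ι κ : Type*} [RCLike 𝕜] [Fintype ι]
    [DecidableEq ι] [Fintype κ] [DecidableEq κ] (p q : ι) (B : Matrix κ κ 𝕜)
    (x y : EuclideanSpace 𝕜 (ι × κ)) :
    ⟪y, toEuclideanCLM (𝕜 := 𝕜) (single p q 1 ⊗ₖ B) x⟫_𝕜
      = ⟪block y p, toEuclideanCLM (𝕜 := 𝕜) B (block x q)⟫_𝕜 := by
  simp only [EuclideanSpace.inner_eq_star_dotProduct, ofLp_toEuclideanCLM, block]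
  simp [dotProduct, mulVec, Fintype.sum_prod_type, Matrix.single_apply, ite_and, ite_mul,
    Finset.sum_ite_eq]

theorem inner_toEuclideanCLM_conjTranspose {𝕜 n : Type*} [RCLike 𝕜] [Fintype n] [DecidableEq n]
    (A : Matrix n n 𝕜) (x y : EuclideanSpace 𝕜 n) :
    ⟪y, toEuclideanCLM (𝕜 := 𝕜) Aᴴ x⟫_𝕜 = starRingEnd 𝕜 ⟪x, toEuclideanCLM (𝕜 := 𝕜) A y⟫_𝕜 := by
  rw [← star_eq_conjTranspose, map_star, ContinuousLinearMap.star_eq_adjoint,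
    ContinuousLinearMap.adjoint_inner_right, inner_conj_symm]

theorem inner_toEuclideanCLM_clockHam (N d : ℕ) (U : Fin N → Matrix (Fin d) (Fin d) ℂ)
    (x : EuclideanSpace ℂ (Fin (N + 1) × Fin d)) :
    ⟪x, toEuclideanCLM (𝕜 := ℂ) (clockHam N d U) x⟫_ℂ =
      ((∑ j : Fin N, √((((j : ℕ) + 1) * (N - (j : ℕ)) : ℕ)) *
        (2 * (⟪block x j.succ, toEuclideanCLM (𝕜 := ℂ) (U j) (block x j.castSucc)⟫_ℂ).re) : ℝ)
        : ℂ) := by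
  simp only [clockHam, map_sum, map_smul, map_add, FunLike.coe_sum,
    Finset.sum_apply, _root_.smul_apply, _root_.add_apply, inner_sum,
    inner_smul_right, inner_add_right, inner_toEuclideanCLM_single_kronecker,
    inner_toEuclideanCLM_conjTranspose, Complex.add_conj]
  push_cast
  rfl

theorem isSymmetric_toEuclideanCLM_clockHam (N d : ℕ) (U : Fin N → Matrix (Fin d) (Fin d) ℂ) :
    (toEuclideanCLM (𝕜 := ℂ) (clockHam N d U)).IsSymmetric := by
  rw [LinearMap.isSymmetric_iff_inner_map_self_real]
  intro x
  rw [ContinuousLinearMap.coe_coe, ← inner_conj_symm _ x, inner_toEuclideanCLM_clockHam,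
    Complex.conj_ofReal, Complex.conj_ofReal]

theorem reApplyInnerSelf_toEuclideanCLM_clockHam (N d : ℕ)
    (U : Fin N → Matrix (Fin d) (Fin d) ℂ) (x : EuclideanSpace ℂ (Fin (N + 1) × Fin d)) :
    (toEuclideanCLM (𝕜 := ℂ) (clockHam N d U)).reApplyInnerSelf x =
      ∑ j : Fin N, √((((j : ℕ) + 1) * (N - (j : ℕ)) : ℕ)) *
        (2 * (⟪block x j.succ, toEuclideanCLM (𝕜 := ℂ) (U j) (block x j.castSucc)⟫_ℂ).re) := by
  rw [ContinuousLinearMap.reApplyInnerSelf_apply, ← inner_conj_symm, RCLike.conj_re,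
    inner_toEuclideanCLM_clockHam, RCLike.re_to_complex, Complex.ofReal_re]

theorem abs_sqrt_mul_mul_two_mul_le {a b u v t : ℝ} (ha : 0 ≤ a) (hb : 0 ≤ b)
    (ht : |t| ≤ u * v) : |√(a * b) * (2 * t)| ≤ a * u ^ 2 + b * v ^ 2 := by
  rw [abs_mul, abs_of_nonneg (Real.sqrt_nonneg _), abs_mul, abs_two, Real.sqrt_mul ha]
  have hsa := Real.sq_sqrt ha
  have hsb := Real.sq_sqrt hb
  calc √a * √b * (2 * |t|) ≤ √a * √b * (2 * (u * v)) := by gcongr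
    _ ≤ a * u ^ 2 + b * v ^ 2 := by nlinarith [sq_nonneg (√a * u - √b * v)]

theorem Fin.sum_succ_mul_add_sub_mul (N : ℕ) (s : Fin (N + 1) → ℝ) :
    ∑ j : Fin N, (((j : ℕ) + 1 : ℕ) * s j.succ + ((N - (j : ℕ) : ℕ) : ℝ) * s j.castSucc) =
      N * ∑ i, s i := by
  rw [Finset.sum_add_distrib, Finset.mul_sum]
  have hsucc := Fin.sum_univ_succ fun i : Fin (N + 1) => ((i : ℕ) : ℝ) * s i
  have hcast := Fin.sum_univ_castSucc fun i : Fin (N + 1) => ((N - (i : ℕ) : ℕ) : ℝ) * s i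
  simp only [Fin.val_succ, Fin.val_zero, Fin.val_castSucc, Fin.val_last, Nat.cast_zero,
    zero_mul, zero_add, Nat.sub_self, add_zero] at hsucc hcast
  rw [← hsucc, ← hcast, ← Finset.sum_add_distrib]
  refine Finset.sum_congr rfl fun i _ => ?_
  rw [← add_mul, ← Nat.cast_add, Nat.add_sub_cancel' (Fin.is_le i)]

theorem abs_reApplyInnerSelf_clockHam_le (N d : ℕ) (U : Fin N → Matrix (Fin d) (Fin d) ℂ)
    (hU : ∀ j, U j ∈ Matrix.unitaryGroup (Fin d) ℂ) (x : EuclideanSpace ℂ (Fin (N + 1) × Fin d)) :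
    |(toEuclideanCLM (𝕜 := ℂ) (clockHam N d U)).reApplyInnerSelf x| ≤ N * ‖x‖ ^ 2 := by
  rw [reApplyInnerSelf_toEuclideanCLM_clockHam, norm_sq_eq_sum_norm_block_sq,
    ← Fin.sum_succ_mul_add_sub_mul]
  refine (Finset.abs_sum_le_sum_abs _ _).trans (Finset.sum_le_sum fun j _ => ?_)
  rw [Nat.cast_mul]
  refine abs_sqrt_mul_mul_two_mul_le (Nat.cast_nonneg _) (Nat.cast_nonneg _) ?_
  calc |(⟪block x j.succ, toEuclideanCLM (𝕜 := ℂ) (U j) (block x j.castSucc)⟫_ℂ).re|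
      ≤ ‖block x j.succ‖ * ‖toEuclideanCLM (𝕜 := ℂ) (U j) (block x j.castSucc)‖ :=
        (Complex.abs_re_le_norm _).trans (norm_inner_le_norm _ _)
    _ = ‖block x j.succ‖ * ‖block x j.castSucc‖ := by
        rw [ContinuousLinearMap.norm_map_of_mem_unitary (Unitary.map_mem _ (hU j))]

def history {α : Type*} {N : ℕ} (f : Fin N → α → α) (a : α) : ℕ → α
  | 0 => a
  | k + 1 => if h : k < N then f ⟨k, h⟩ (history f a k) else history f a k

theorem history_succ {α : Type*} {N : ℕ} (f : Fin N → α → α) (a : α) (j : Fin N) :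
    history f a (j + 1) = f j (history f a j) := by
  simp [history, j.isLt]

theorem norm_history {E : Type*} [Norm E] {N : ℕ} {f : Fin N → E → E}
    (hf : ∀ j x, ‖f j x‖ = ‖x‖) (a : E) (k : ℕ) : ‖history f a k‖ = ‖a‖ := by
  induction k with
  | zero => rfl
  | succ k ih =>
    rw [history]
    split_ifs
    · rw [hf, ih]
    · exact ih

theorem sqrt_mul_two_mul_sqrt_choose (N k : ℕ) :
    √(((k + 1) * (N - k) : ℕ) : ℝ) * (2 * (√(N.choose (k + 1)) * √(N.choose k))) =
      ((k + 1 : ℕ) : ℝ) * N.choose (k + 1) + ((N - k : ℕ) : ℝ) * N.choose k := by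
  have key : ((k + 1 : ℕ) : ℝ) * N.choose (k + 1) = ((N - k : ℕ) : ℝ) * N.choose k := by
    exact_mod_cast (mul_comm _ _).trans ((Nat.choose_succ_right_eq N k).trans (mul_comm _ _))
  have hsq : (((k + 1) * (N - k) : ℕ) : ℝ) * (N.choose (k + 1) * N.choose k) =
      (((k + 1 : ℕ) : ℝ) * N.choose (k + 1)) ^ 2 := by
    rw [sq]
    nth_rw 2 [key]
    push_cast
    ring
  rw [← Real.sqrt_mul (Nat.cast_nonneg _), mul_left_comm, ← Real.sqrt_mul (Nat.cast_nonneg _),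
    hsq, Real.sqrt_sq (by positivity), ← key]
  ring

theorem exists_reApplyInnerSelf_clockHam_eq (N d : ℕ) (hd : 0 < d)
    (U : Fin N → Matrix (Fin d) (Fin d) ℂ) (hU : ∀ j, U j ∈ Matrix.unitaryGroup (Fin d) ℂ) :
    ∃ x ≠ 0, (toEuclideanCLM (𝕜 := ℂ) (clockHam N d U)).reApplyInnerSelf x = N * ‖x‖ ^ 2 := by
  set e : EuclideanSpace ℂ (Fin d) := EuclideanSpace.single ⟨0, hd⟩ 1
  set V : Fin N → EuclideanSpace ℂ (Fin d) → EuclideanSpace ℂ (Fin d) :=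
    fun j => toEuclideanCLM (𝕜 := ℂ) (U j)
  have hV : ∀ j v, ‖V j v‖ = ‖v‖ := fun j =>
    ContinuousLinearMap.norm_map_of_mem_unitary (Unitary.map_mem _ (hU j))
  have he : ‖e‖ = 1 := by simp [e]
  set x := ofBlocks fun i : Fin (N + 1) => (√(N.choose i) : ℂ) • history V e i
  have hblock : ∀ i, ‖block x i‖ ^ 2 = N.choose i := fun i => by
    rw [block_ofBlocks, norm_smul, norm_history hV, he]
    simp
  refine ⟨x, fun h => ?_, ?_⟩
  · have h0 := hblock 0
    rw [h] at h0
    simp [block, ← Pi.zero_def] at h0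
  · rw [reApplyInnerSelf_toEuclideanCLM_clockHam, norm_sq_eq_sum_norm_block_sq,
      ← Fin.sum_succ_mul_add_sub_mul]
    refine Finset.sum_congr rfl fun j _ => ?_
    rw [hblock, hblock]
    simp only [x, block_ofBlocks, Fin.val_succ, Fin.val_castSucc, map_smul, history_succ]
    rw [inner_smul_left, inner_smul_right, inner_self_eq_norm_sq_to_K, hV, norm_history hV, he,
      Complex.conj_ofReal, RCLike.ofReal_one, one_pow, mul_one, ← Complex.ofReal_mul,
      Complex.ofReal_re]
    exact sqrt_mul_two_mul_sqrt_choose N j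

/-- The operator norm of the Feynman clock Hamiltonian on `ℂ^{N+1} ⊗ ℂ^d` equals `N`. -/
theorem clockHam_opNorm (N d : ℕ) (hd : 0 < d) (U : Fin N → Matrix (Fin d) (Fin d) ℂ)
    (hU : ∀ j, U j ∈ Matrix.unitaryGroup (Fin d) ℂ) :
    l2OpNorm (clockHam N d U) = N := by
  have hsymm := isSymmetric_toEuclideanCLM_clockHam N d U
  refine le_antisymm (ContinuousLinearMap.norm_le_of_abs_reApplyInnerSelf_le hsymm N.cast_nonneg
    (abs_reApplyInnerSelf_clockHam_le N d U hU)) ?_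
  obtain ⟨x, hx, hquad⟩ := exists_reApplyInnerSelf_clockHam_eq N d hd U hU
  simpa [l2OpNorm] using ContinuousLinearMap.abs_le_norm_of_reApplyInnerSelf_eq _ hx hquad
end

section
/- Let N, d be natural numbers and U_1, …, U_N unitary d×d complex matrices. The eigenvalues of the Feynman clock Hamiltonian H_U on ℂ^{N+1} ⊗ ℂ^d, counted with multiplicity, are exactly the numbers N − 2k for k = 0, 1, …, N, each occurring with multiplicity d. -/
open Matrix Kronecker Polynomial

/-!
Conjugating by the block-diagonal unitary `diag(V_0, …, V_N)` with `V_{j+1} = V_j U_j⁻¹` removes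
the `U_j`: `H_U` is unitarily equivalent to `A ⊗ 1`, where `A` is the tridiagonal matrix with
off-diagonal entries `√(j(N−j+1))` (twice the spin-`N/2` operator `J_x`). Rescaling the basis
by `√(N choose j)` turns `A` into the matrix, in the monomial basis, of the operator
`p ↦ N X p + (1 − X²) p'` on polynomials of degree `≤ N`, which has the `N + 1` eigenvectors
`(1 − X)^k (1 + X)^(N−k)` with the distinct eigenvalues `N − 2k`.
-/

namespace Matrix

section Charpoly

variable {n R : Type*} [Fintype n] [DecidableEq n] [CommRing R]

theorem charpoly_mul_mul_of_mul_eq_one {P Q : Matrix n n R} (hQP : Q * P = 1)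
    (M : Matrix n n R) : (P * M * Q).charpoly = M.charpoly := by
  rw [charpoly_mul_comm, ← mul_assoc, hQP, one_mul]

theorem charmatrix_kronecker_one {m : Type*} [Fintype m] [DecidableEq m] (A : Matrix n n R) :
    charmatrix (A ⊗ₖ (1 : Matrix m m R)) = charmatrix A ⊗ₖ (1 : Matrix m m R[X]) := by
  ext ⟨i, x⟩ ⟨j, y⟩
  by_cases hij : i = j <;> by_cases hxy : x = y <;> simp [hij, hxy]

theorem charpoly_kronecker_one {m : Type*} [Fintype m] [DecidableEq m] (A : Matrix n n R) :
    (A ⊗ₖ (1 : Matrix m m R)).charpoly = A.charpoly ^ Fintype.card m := by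
  rw [charpoly, charmatrix_kronecker_one, det_kronecker, det_one, one_pow, mul_one, charpoly]

theorem isRoot_charpoly_of_mulVec_eq_smul [IsDomain R] {M : Matrix n n R} {v : n → R} {μ : R}
    (hv : v ≠ 0) (h : M *ᵥ v = μ • v) : M.charpoly.IsRoot μ := by
  rw [← charpoly_toLin', ← Module.End.hasEigenvalue_iff_isRoot_charpoly]
  exact Module.End.hasEigenvalue_of_hasEigenvector
    ⟨Module.End.mem_eigenspace_iff.mpr (by simpa using h), hv⟩

theorem charpoly_eq_prod_of_isRoot [IsDomain R] (M : Matrix n n R) {f : n → R}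
    (hf : Function.Injective f) (hroot : ∀ i, M.charpoly.IsRoot (f i)) :
    M.charpoly = ∏ i, (X - C (f i)) := by
  let e : n ↪ R := ⟨f, hf⟩
  have hroots : M.charpoly.roots = (Finset.univ.map e).val :=
    roots_eq_of_natDegree_le_card_of_ne_zero (by simpa [e] using hroot) (by simp)
      M.charpoly_monic.ne_zero
  rw [← prod_multiset_X_sub_C_of_monic_of_roots_card_eq M.charpoly_monic (by simp [hroots]),
    hroots, ← Finset.prod_eq_multiset_prod, Finset.prod_map]
  rfl

theorem diagonal_mul_single_mul_diagonal (d e : n → R) (i j : n) (c : R) :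
    diagonal d * single i j c * diagonal e = single i j (d i * c * e j) := by
  ext k l
  rw [mul_diagonal, diagonal_mul]
  by_cases h : i = k ∧ j = l
  · obtain ⟨rfl, rfl⟩ := h
    simp
  · simp [single_apply_of_ne (h := h)]

end Charpoly

theorem sum_kronecker_s5 {R κ l m n p : Type*} [CommSemiring R] (s : Finset κ)
    (A : κ → Matrix l m R) (B : Matrix n p R) : (∑ k ∈ s, A k) ⊗ₖ B = ∑ k ∈ s, A k ⊗ₖ B :=
  map_sum ((kroneckerBilinear (R := R) (α := R)).flip B) A s

section BlockDiagonalKron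

variable {ι m R : Type*} [Fintype ι] [DecidableEq ι] [CommSemiring R]

/-- `Matrix.blockDiagonal V` with the two index coordinates swapped. -/
def blockDiagonalKron (V : ι → Matrix m m R) : Matrix (ι × m) (ι × m) R :=
  ∑ i, single i i 1 ⊗ₖ V i

theorem blockDiagonalKron_mul_single_kronecker [Fintype m] (V : ι → Matrix m m R) (a b : ι)
    (M : Matrix m m R) :
    blockDiagonalKron V * (single a b 1 ⊗ₖ M) = single a b 1 ⊗ₖ (V a * M) := by
  rw [blockDiagonalKron, Finset.sum_mul, Finset.sum_eq_single a]
  · rw [← mul_kronecker_mul, single_mul_single_same, one_mul]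
  · intro i _ hia
    rw [← mul_kronecker_mul, single_mul_single_of_ne (h := hia), zero_kronecker]
  · simp

theorem single_kronecker_mul_blockDiagonalKron [Fintype m] (V : ι → Matrix m m R) (a b : ι)
    (M : Matrix m m R) :
    (single a b 1 ⊗ₖ M) * blockDiagonalKron V = single a b 1 ⊗ₖ (M * V b) := by
  rw [blockDiagonalKron, Finset.mul_sum, Finset.sum_eq_single b]
  · rw [← mul_kronecker_mul, single_mul_single_same, mul_one]
  · intro i _ hib
    rw [← mul_kronecker_mul, single_mul_single_of_ne (h := hib.symm), zero_kronecker]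
  · simp

theorem blockDiagonalKron_mul_blockDiagonalKron [Fintype m] (V V' : ι → Matrix m m R) :
    blockDiagonalKron V * blockDiagonalKron V' = blockDiagonalKron (V * V') := by
  nth_rw 2 [blockDiagonalKron]
  simp only [Finset.mul_sum, blockDiagonalKron_mul_single_kronecker]
  rfl

theorem blockDiagonalKron_one [DecidableEq m] : blockDiagonalKron (1 : ι → Matrix m m R) = 1 := by
  simp only [blockDiagonalKron, Pi.one_apply, ← sum_kronecker_s5, sum_single_one, one_kronecker_one]

end BlockDiagonalKron

end Matrix

section SubSuperDiagonal

variable {R : Type*} [CommRing R]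

noncomputable def subSuperDiagonal (N : ℕ) (a b : ℕ → R) : Matrix (Fin (N + 1)) (Fin (N + 1)) R :=
  ∑ j : Fin N, (a j • single j.succ j.castSucc 1 + b j • single j.castSucc j.succ 1)

theorem subSuperDiagonal_mulVec_apply (N : ℕ) (a b v : ℕ → R) (i : Fin (N + 1)) :
    (subSuperDiagonal N a b *ᵥ fun k => v k) i =
      ∑ j ∈ Finset.range N, ((if (i : ℕ) = j + 1 then a j * v j else 0) +
        if (i : ℕ) = j then b j * v (j + 1) else 0) := by
  rw [subSuperDiagonal, ← Fin.sum_univ_eq_sum_range (fun j => (if (i : ℕ) = j + 1 then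
    a j * v j else 0) + if (i : ℕ) = j then b j * v (j + 1) else 0), sum_mulVec]
  simp [Finset.sum_apply, add_mulVec, single_mulVec, Function.update_apply, Fin.ext_iff]

theorem diagonal_mul_subSuperDiagonal_mul_diagonal {N : ℕ} (d e : Fin (N + 1) → R)
    {a b a' b' : ℕ → R} (ha : ∀ j : Fin N, d j.succ * a j * e j.castSucc = a' j)
    (hb : ∀ j : Fin N, d j.castSucc * b j * e j.succ = b' j) :
    diagonal d * subSuperDiagonal N a b * diagonal e = subSuperDiagonal N a' b' := by
  simp only [subSuperDiagonal, Finset.mul_sum, Finset.sum_mul, mul_add, add_mul,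
    diagonal_mul_single_mul_diagonal, smul_single, smul_eq_mul]
  refine Finset.sum_congr rfl fun j _ => ?_
  rw [← ha j, ← hb j]
  ring_nf

theorem charpoly_sum_single_kronecker_units {m : Type*} [Fintype m] [DecidableEq m] (N : ℕ)
    (c : ℕ → R) (u : Fin N → (Matrix m m R)ˣ) :
    (∑ j : Fin N, c j • (single j.succ j.castSucc 1 ⊗ₖ (u j : Matrix m m R) +
      single j.castSucc j.succ 1 ⊗ₖ ↑(u j)⁻¹)).charpoly =
      (subSuperDiagonal N c c).charpoly ^ Fintype.card m := by
  set V := Fin.partialProd fun j => (u j)⁻¹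
  have hconj : (∑ j : Fin N, c j • (single j.succ j.castSucc 1 ⊗ₖ (u j : Matrix m m R) +
      single j.castSucc j.succ 1 ⊗ₖ ↑(u j)⁻¹)) =
      blockDiagonalKron (fun i => ↑(V i)⁻¹) * (subSuperDiagonal N c c ⊗ₖ 1) *
        blockDiagonalKron (fun i => ↑(V i)) := by
    simp only [subSuperDiagonal, sum_kronecker_s5, Finset.mul_sum, Finset.sum_mul, add_kronecker,
      smul_kronecker, mul_add, add_mul, mul_smul_comm, smul_mul_assoc,
      blockDiagonalKron_mul_single_kronecker, single_kronecker_mul_blockDiagonalKron]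
    refine Finset.sum_congr rfl fun j _ => ?_
    -- `V j.succ = V j.castSucc * (u j)⁻¹`, so `(V j.succ)⁻¹ * V j.castSucc = u j`
    simp [V, Fin.partialProd_succ, smul_add, mul_assoc]
  have hinv : blockDiagonalKron (fun i => (V i).val) * blockDiagonalKron (fun i => (V i)⁻¹.val) =
      1 := by
    rw [blockDiagonalKron_mul_blockDiagonalKron, ← blockDiagonalKron_one]
    exact congrArg blockDiagonalKron (funext fun i => (V i).mul_inv)
  rw [hconj, charpoly_mul_mul_of_mul_eq_one hinv, charpoly_kronecker_one]

end SubSuperDiagonal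

section Krawtchouk

variable {R : Type*} [CommRing R]

theorem Polynomial.mul_derivative_pow (p : R[X]) (n : ℕ) :
    p * derivative (p ^ n) = (n : R[X]) * derivative p * p ^ n := by
  rcases n with _ | n
  · simp
  · rw [derivative_pow, map_natCast, Nat.add_sub_cancel, pow_succ]
    ring

noncomputable def krawtchoukOp (N : ℕ) (p : R[X]) : R[X] :=
  (N : R[X]) * X * p + (1 - X ^ 2) * derivative p

/-- The generating function `∑ⱼ Kⱼ(k) Xʲ` of the Krawtchouk polynomials `Kⱼ`. -/
noncomputable def krawtchoukGen (N k : ℕ) : R[X] := (1 - X) ^ k * (1 + X) ^ (N - k)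

noncomputable def krawtchoukMatrix (N : ℕ) : Matrix (Fin (N + 1)) (Fin (N + 1)) R :=
  subSuperDiagonal N (fun j => (N : R) - j) (fun j => j + 1)

theorem krawtchoukGen_ne_zero [IsDomain R] (N k : ℕ) : (krawtchoukGen N k : R[X]) ≠ 0 := by
  have h₁ : (1 - X : R[X]) ≠ 0 := fun h => by simpa [coeff_one] using congrArg (coeff · 1) h
  have h₂ : (1 + X : R[X]) ≠ 0 := fun h => by simpa [coeff_one] using congrArg (coeff · 1) h
  exact mul_ne_zero (pow_ne_zero _ h₁) (pow_ne_zero _ h₂)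

theorem natDegree_krawtchoukGen_le (N k : ℕ) (hk : k ≤ N) :
    (krawtchoukGen N k : R[X]).natDegree ≤ N := by
  unfold krawtchoukGen
  compute_degree
  omega

theorem krawtchoukOp_krawtchoukGen (N k : ℕ) (hk : k ≤ N) :
    krawtchoukOp N (krawtchoukGen N k : R[X]) = C ((N : R) - 2 * k) * krawtchoukGen N k := by
  have h₁ := mul_derivative_pow (1 - X : R[X]) k
  have h₂ := mul_derivative_pow (1 + X : R[X]) (N - k)
  simp only [derivative_sub, derivative_add, derivative_one, derivative_X, zero_sub,
    zero_add] at h₁ h₂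
  unfold krawtchoukOp krawtchoukGen
  rw [derivative_mul, map_sub, map_mul, map_natCast, map_natCast, map_ofNat,
    Nat.cast_sub hk] at *
  linear_combination (1 + X) * (1 + X) ^ (N - k) * h₁ + (1 - X) * (1 - X) ^ k * h₂

theorem coeff_krawtchoukOp_zero (N : ℕ) (p : R[X]) :
    (krawtchoukOp N p).coeff 0 = p.coeff 1 := by
  simp [krawtchoukOp, sub_mul, coeff_derivative]

theorem coeff_krawtchoukOp_succ (N i : ℕ) (p : R[X]) :
    (krawtchoukOp N p).coeff (i + 1) = ((N : R) - i) * p.coeff i + (i + 2) * p.coeff (i + 2) := by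
  rcases i with _ | i <;>
  · simp [krawtchoukOp, sub_mul, coeff_derivative, mul_assoc, coeff_X_pow_mul', coeff_X_mul]
    ring

theorem krawtchoukMatrix_mulVec_coeff (N : ℕ) {p : R[X]} (hp : p.natDegree ≤ N) :
    (krawtchoukMatrix N *ᵥ fun k : Fin (N + 1) => p.coeff k) =
      fun k : Fin (N + 1) => (krawtchoukOp N p).coeff k := by
  ext ⟨i, hi⟩
  have hvanish : p.coeff (N + 1) = 0 := coeff_eq_zero_of_natDegree_lt (by omega)
  rw [krawtchoukMatrix, subSuperDiagonal_mulVec_apply, Finset.sum_add_distrib]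
  rcases i with _ | i
  · rw [coeff_krawtchoukOp_zero]
    rcases N with _ | N
    · simpa using hvanish.symm
    · simp
  · simp only [add_left_inj, Finset.sum_ite_eq, Finset.mem_range, if_pos (by omega : i < N),
      coeff_krawtchoukOp_succ]
    split_ifs with h
    · push_cast; ring
    · obtain rfl : i + 1 = N := by omega
      simp [hvanish]

theorem charpoly_krawtchoukMatrix [IsDomain R] [CharZero R] (N : ℕ) :
    (krawtchoukMatrix N : Matrix _ _ R).charpoly =
      ∏ k : Fin (N + 1), (X - C ((N : R) - 2 * k)) := by
  refine charpoly_eq_prod_of_isRoot _ (fun k l hkl => ?_) fun k => ?_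
  · simpa [Fin.ext_iff] using hkl
  have hq := krawtchoukGen_ne_zero (R := R) N k
  have hdeg := natDegree_krawtchoukGen_le (R := R) N k (by omega)
  refine isRoot_charpoly_of_mulVec_eq_smul (v := fun i : Fin (N + 1) => (krawtchoukGen N k).coeff i)
    (fun h => ?_) ?_
  · exact hq (leadingCoeff_eq_zero.mp (by simpa using congrFun h ⟨_, Nat.lt_succ_of_le hdeg⟩))
  · rw [krawtchoukMatrix_mulVec_coeff N hdeg, krawtchoukOp_krawtchoukGen N k (by omega)]
    ext i
    simp only [coeff_C_mul, Pi.smul_apply, smul_eq_mul]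

end Krawtchouk

theorem Real.sqrt_choose_succ_mul (N j : ℕ) :
    √(N.choose (j + 1)) * √(((j + 1) * (N - j) : ℕ)) = ((N - j : ℕ) : ℝ) * √(N.choose j) := by
  rw [← Real.sqrt_sq (Nat.cast_nonneg (N - j)), ← Real.sqrt_mul (sq_nonneg _),
    ← Real.sqrt_mul (Nat.cast_nonneg _)]
  have h : N.choose (j + 1) * ((j + 1) * (N - j)) = (N - j) ^ 2 * N.choose j := by
    rw [← mul_assoc, Nat.choose_succ_right_eq]
    ring
  exact_mod_cast congrArg Real.sqrt (congrArg (Nat.cast (R := ℝ)) h)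

theorem Real.sqrt_choose_mul (N j : ℕ) :
    √(N.choose j) * √(((j + 1) * (N - j) : ℕ)) = ((j + 1 : ℕ) : ℝ) * √(N.choose (j + 1)) := by
  rw [← Real.sqrt_sq (Nat.cast_nonneg (j + 1)), ← Real.sqrt_mul (sq_nonneg _),
    ← Real.sqrt_mul (Nat.cast_nonneg _)]
  have h : N.choose j * ((j + 1) * (N - j)) = (j + 1) ^ 2 * N.choose (j + 1) := by
    rw [mul_left_comm, ← Nat.choose_succ_right_eq]
    ring
  exact_mod_cast congrArg Real.sqrt (congrArg (Nat.cast (R := ℝ)) h)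

theorem charpoly_subSuperDiagonal_sqrt_eq_krawtchoukMatrix (N : ℕ) :
    (subSuperDiagonal N (fun j => (√(((j + 1) * (N - j) : ℕ)) : ℂ))
        fun j => (√(((j + 1) * (N - j) : ℕ)) : ℂ)).charpoly = (krawtchoukMatrix N).charpoly := by
  set c : ℕ → ℂ := fun j => √(((j + 1) * (N - j) : ℕ))
  set d : Fin (N + 1) → ℂ := fun j => √(N.choose j)
  have hd : ∀ j, d j ≠ 0 := fun j => by
    simpa [d] using (Nat.choose_pos (Nat.lt_succ_iff.mp j.isLt)).ne'
  have ha : ∀ j : Fin N, d j.succ * c j * d⁻¹ j.castSucc = (N : ℂ) - j := fun j => by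
    have h := Real.sqrt_choose_succ_mul N j
    rw [Nat.cast_sub j.isLt.le] at h
    rw [Pi.inv_apply, mul_inv_eq_iff_eq_mul₀ (hd _)]
    simp only [d, c, Fin.val_succ, Fin.val_castSucc]
    exact_mod_cast h
  have hb : ∀ j : Fin N, d j.castSucc * c j * d⁻¹ j.succ = (j : ℂ) + 1 := fun j => by
    rw [Pi.inv_apply, mul_inv_eq_iff_eq_mul₀ (hd _)]
    simp only [d, c, Fin.val_succ, Fin.val_castSucc]
    exact_mod_cast Real.sqrt_choose_mul N j
  have hinv : diagonal d⁻¹ * diagonal d = 1 := by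
    rw [diagonal_mul_diagonal, ← diagonal_one]
    exact congrArg diagonal (funext fun j => inv_mul_cancel₀ (hd j))
  rw [krawtchoukMatrix, ← diagonal_mul_subSuperDiagonal_mul_diagonal (a := c) (b := c)
    (a' := fun j => (N : ℂ) - j) (b' := fun j => (j : ℂ) + 1) d d⁻¹ ha hb,
    charpoly_mul_mul_of_mul_eq_one hinv]

/-- The eigenvalues of the Feynman clock Hamiltonian, counted with multiplicity, are
exactly the numbers `N − 2k`, `k = 0, …, N`, each with multiplicity `d` (expressed via
the characteristic polynomial). -/
theorem clockHam_eigenvalues (N d : ℕ) (U : Fin N → Matrix (Fin d) (Fin d) ℂ)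
    (hU : ∀ j, U j ∈ Matrix.unitaryGroup (Fin d) ℂ) :
    (clockHam N d U).charpoly =
      ∏ k ∈ Finset.range (N + 1), (X - C ((N : ℂ) - 2 * (k : ℂ))) ^ d := by
  -- `clockHam N d U` is the sum below, `(U j)ᴴ` being the inverse of `U j` as a unit
  have h := charpoly_sum_single_kronecker_units N (fun j => (√(((j + 1) * (N - j) : ℕ)) : ℂ))
    fun j => Unitary.toUnits ⟨U j, hU j⟩
  rw [charpoly_subSuperDiagonal_sqrt_eq_krawtchoukMatrix, charpoly_krawtchoukMatrix,
    Fintype.card_fin, ← Finset.prod_pow,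
    Fin.prod_univ_eq_prod_range (fun k => (X - C ((N : ℂ) - 2 * k)) ^ d)] at h
  exact h
end

section
/- Let n ≥ 1. For each s ∈ {1,…,n}, let T_s be the unitary on ℂ^{2^n} ⊗ ℂ^{2^n} ⊗ ℂ² acting on computational basis vectors by T_s(|y⟩ ⊗ |z⟩ ⊗ |b⟩) = |y⟩ ⊗ |z⟩ ⊗ |b ⊕ (y_s ∧ z_s)⟩ for y, z ∈ {0,1}^n and b ∈ {0,1}, and define the inner-product clock Hamiltonian H_IP = Σ_{s=1}^{n} √(s(n−s+1)) (E_{s,s-1} ⊗ T_s + E_{s-1,s} ⊗ T_s†) on ℂ^{n+1} ⊗ ℂ^{2^n} ⊗ ℂ^{2^n} ⊗ ℂ². Then for all y, z ∈ {0,1}^n and b ∈ {0,1}, exp(−i(π/2)·H_IP)(e_0 ⊗ |y⟩ ⊗ |z⟩ ⊗ |b⟩) = (−i)^n · e_n ⊗ |y⟩ ⊗ |z⟩ ⊗ |b ⊕ (⊕_{s=1}^{n} (y_s ∧ z_s))⟩, where e_0 and e_n are the first and last standard basis vectors of ℂ^{n+1}. -/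
open Matrix Kronecker

/-- The Toffoli-type step `T_s` on `ℂ^{2^n} ⊗ ℂ^{2^n} ⊗ ℂ²` (basis indexed by pairs of
bit strings and one bit): `T_s(|y⟩ ⊗ |z⟩ ⊗ |b⟩) = |y⟩ ⊗ |z⟩ ⊗ |b ⊕ (y_s ∧ z_s)⟩`,
with bits in `ZMod 2` (so `⊕` is `+` and `∧` is `*`). -/
def ipStep (n : ℕ) (s : Fin n) :
    Matrix ((Fin n → ZMod 2) × (Fin n → ZMod 2) × ZMod 2)
      ((Fin n → ZMod 2) × (Fin n → ZMod 2) × ZMod 2) ℂ :=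
  Matrix.of fun p q => if p = (q.1, q.2.1, q.2.2 + q.1 s * q.2.1 s) then 1 else 0

/-- The inner-product clock Hamiltonian
`H_IP = Σ_{s=1}^{n} √(s(n−s+1)) (E_{s,s-1} ⊗ T_s + E_{s-1,s} ⊗ T_s†)`
on `ℂ^{n+1} ⊗ ℂ^{2^n} ⊗ ℂ^{2^n} ⊗ ℂ²` (here indexed by `s : Fin n`, representing `s+1`). -/
noncomputable def ipHam (n : ℕ) :
    Matrix ((Fin (n + 1)) × ((Fin n → ZMod 2) × (Fin n → ZMod 2) × ZMod 2))
      ((Fin (n + 1)) × ((Fin n → ZMod 2) × (Fin n → ZMod 2) × ZMod 2)) ℂ :=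
  ∑ s : Fin n, (Real.sqrt ((((s : ℕ) + 1) * (n - (s : ℕ)) : ℕ)) : ℂ) •
    ((Matrix.single s.succ s.castSucc (1 : ℂ)) ⊗ₖ ipStep n s +
      (Matrix.single s.castSucc s.succ (1 : ℂ)) ⊗ₖ (ipStep n s)ᴴ)

/-!
On the states `e_k ⊗ |y, z, b + Σ_{s<k} y_s z_s⟩` the Hamiltonian `H_IP` acts as the Krawtchouk
chain with couplings `√((k+1)(n-k))`, since `T_s` moves the `(s-1)`-st such state to the `s`-th.
The Krawtchouk chain is in turn the adjacency matrix of the hypercube `{0,1}^n` compressed to the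
normalised Dicke states (the uniform superpositions over a Hamming sphere): a vertex of weight `w`
has `n - w` neighbours of weight `w + 1` and `w` of weight `w - 1`. The hypercube adjacency is the
sum `Σ_s X_s` of commuting bit flips, so `exp(-iπ/2 Σ_s X_s) = Π_s (-i X_s)` sends `|0…0⟩` to
`(-i)^n |1…1⟩`, i.e. the Dicke state of weight `0` to that of weight `n`. Pulling this back along
the two intertwiners gives the result.
-/

open NormedSpace

theorem Fin.partialSum_last {M : Type*} [AddCommMonoid M] {n : ℕ} (f : Fin n → M) :
    Fin.partialSum f (Fin.last n) = ∑ i, f i := by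
  rw [Fin.partialSum, Fin.val_last, List.take_of_length_le (by simp), List.sum_ofFn]

theorem Real.sqrt_mul_div_sqrt_of_mul_eq {a b u v : ℝ} (ha : 0 ≤ a) (hb : 0 ≤ b) (hu : 0 < u)
    (hv : 0 < v) (h : a * v = b * u) : √(a * b) / √u = b / √v := by
  rw [div_eq_div_iff (Real.sqrt_pos.2 hu).ne' (Real.sqrt_pos.2 hv).ne',
    ← Real.sqrt_mul (mul_nonneg ha hb), show a * b * v = b ^ 2 * u by linear_combination b * h,
    Real.sqrt_mul (sq_nonneg b), Real.sqrt_sq hb]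

section HammingNorm

theorem hammingNorm_lt_succ {n : ℕ} {β : Type*} [Zero β] [DecidableEq β] (x : Fin n → β) :
    hammingNorm x < n + 1 :=
  Nat.lt_succ_of_le (hammingNorm_le_card_fintype.trans_eq (Fintype.card_fin n))

variable {ι : Type*} [Fintype ι] [DecidableEq ι] {x : ι → ZMod 2} {s : ι}

theorem hammingNorm_sub_single_of_eq_zero (hs : x s = 0) :
    hammingNorm (x - Pi.single s 1) = hammingNorm x + 1 := by
  have hsupp : Finset.univ.filter (fun i => (x - Pi.single s 1 : ι → ZMod 2) i ≠ 0) =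
      insert s (Finset.univ.filter (x · ≠ 0)) := by
    ext i
    by_cases hi : i = s
    · subst hi
      simp [hs]
    · simp [hi]
  rw [hammingNorm, hammingNorm, hsupp, Finset.card_insert_of_notMem (by simp [hs])]

theorem hammingNorm_sub_single_add_one_of_ne_zero (hs : x s ≠ 0) :
    hammingNorm (x - Pi.single s 1) + 1 = hammingNorm x := by
  have hs1 : x s = 1 := by
    generalize x s = a at hs
    revert a
    decide
  have hsupp : Finset.univ.filter (fun i => (x - Pi.single s 1 : ι → ZMod 2) i ≠ 0) =
      (Finset.univ.filter (x · ≠ 0)).erase s := by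
    ext i
    by_cases hi : i = s
    · subst hi
      simp [hs1]
    · simp [hi]
  rw [hammingNorm, hammingNorm, hsupp, Finset.card_erase_add_one (by simp [hs])]

end HammingNorm

section MatrixExponential

variable {m m' : Type*} [Fintype m] [DecidableEq m] [Fintype m'] [DecidableEq m']

theorem Matrix.exp_smul_of_mul_self_eq_one {M : Matrix m m ℂ} (hM : M * M = 1) (c : ℂ) :
    exp (c • M) = Complex.cosh c • (1 : Matrix m m ℂ) + Complex.sinh c • M := by
  let _ : NormedRing (Matrix m m ℂ) := Matrix.linftyOpNormedRing
  let _ : NormedAlgebra ℂ (Matrix m m ℂ) := Matrix.linftyOpNormedAlgebra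
  have hpow (k : ℕ) : M ^ (2 * k) = 1 := by rw [pow_mul, sq, hM, one_pow]
  refine (exp_series_hasSum_exp' (𝕂 := ℂ) (c • M)).unique (HasSum.even_add_odd ?_ ?_)
  · refine ((Complex.hasSum_cosh c).smul_const (1 : Matrix m m ℂ)).congr_fun fun k => ?_
    rw [smul_pow, hpow, smul_smul, div_eq_inv_mul]
  · refine ((Complex.hasSum_sinh c).smul_const M).congr_fun fun k => ?_
    rw [smul_pow, pow_succ M, hpow, one_mul, smul_smul, div_eq_inv_mul]

theorem Matrix.exp_mul_eq_mul_exp {A : Matrix m m ℂ} {B : Matrix m' m' ℂ} {P : Matrix m m' ℂ}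
    (h : A * P = P * B) : exp A * P = P * exp B := by
  let _ : NormedRing (Matrix m m ℂ) := Matrix.linftyOpNormedRing
  let _ : NormedAlgebra ℂ (Matrix m m ℂ) := Matrix.linftyOpNormedAlgebra
  let _ : NormedRing (Matrix m' m' ℂ) := Matrix.linftyOpNormedRing
  let _ : NormedAlgebra ℂ (Matrix m' m' ℂ) := Matrix.linftyOpNormedAlgebra
  have hpow (k : ℕ) : A ^ k * P = P * B ^ k := by
    induction k with
    | zero => simp
    | succ k ih =>
      rw [pow_succ, pow_succ, Matrix.mul_assoc, h, ← Matrix.mul_assoc, ih, Matrix.mul_assoc]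
  have hA := (exp_series_hasSum_exp' (𝕂 := ℂ) A).map (addMonoidHomMulRight P)
    (continuous_id.matrix_mul continuous_const)
  have hB := (exp_series_hasSum_exp' (𝕂 := ℂ) B).map (addMonoidHomMulLeft P)
    (continuous_const.matrix_mul continuous_id)
  refine hA.unique (hB.congr_fun fun k => ?_)
  simp [Matrix.smul_mul, Matrix.mul_smul, hpow]

end MatrixExponential

section Translation

theorem Matrix.permMatrix_addRight_mulVec_single {V R : Type*} [AddGroup V] [Fintype V]
    [DecidableEq V] [NonAssocSemiring R] (v x : V) :
    (Equiv.addRight v).permMatrix R *ᵥ Pi.single x 1 = Pi.single (x - v) 1 := by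
  rw [mulVec_single_one]
  ext p
  simp [Pi.single_apply, eq_sub_iff_add_eq]

variable {V : Type*} [AddCommGroup V] [Fintype V] [DecidableEq V]

theorem Matrix.permMatrix_addRight_mul {R : Type*} [NonAssocSemiring R] (v w : V) :
    (Equiv.addRight v).permMatrix R * (Equiv.addRight w).permMatrix R =
      (Equiv.addRight (v + w)).permMatrix R := by
  rw [Equiv.addRight_add, Matrix.permMatrix_mul]

theorem Matrix.exp_smul_permMatrix_addRight {v : V} (hv : v + v = 0) {c : ℂ}
    (hc : Complex.cosh c = 0) :
    exp (c • (Equiv.addRight v).permMatrix ℂ) =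
      Complex.sinh c • (Equiv.addRight v).permMatrix ℂ := by
  have hinv : (Equiv.addRight v).permMatrix ℂ * (Equiv.addRight v).permMatrix ℂ = 1 := by
    rw [permMatrix_addRight_mul, hv, Equiv.addRight_zero, permMatrix_one]
  rw [exp_smul_of_mul_self_eq_one hinv, hc, zero_smul, zero_add]

theorem Matrix.exp_sum_smul_permMatrix_addRight {ι : Type*} (t : Finset ι) {v : ι → V}
    (hv : ∀ i, v i + v i = 0) {c : ℂ} (hc : Complex.cosh c = 0) :
    exp (∑ i ∈ t, c • (Equiv.addRight (v i)).permMatrix ℂ) =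
      Complex.sinh c ^ t.card • (Equiv.addRight (∑ i ∈ t, v i)).permMatrix ℂ := by
  classical
  induction t using Finset.induction_on with
  | empty => simp
  | insert i t hi ih =>
    have hcomm : Commute (c • (Equiv.addRight (v i)).permMatrix ℂ)
        (∑ j ∈ t, c • (Equiv.addRight (v j)).permMatrix ℂ) := by
      refine Commute.sum_right _ _ _ fun j _ => (Commute.smul_left ?_ c).smul_right c
      rw [Commute, SemiconjBy, permMatrix_addRight_mul, permMatrix_addRight_mul, add_comm]
    rw [Finset.sum_insert hi, exp_add_of_commute _ _ hcomm, ih,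
      exp_smul_permMatrix_addRight (hv i) hc, Matrix.smul_mul, Matrix.mul_smul, smul_smul,
      permMatrix_addRight_mul, Finset.sum_insert hi, Finset.card_insert_of_notMem hi, pow_succ']

end Translation

section GraphMatrix

variable {ι κ R : Type*} [DecidableEq ι] [DecidableEq κ] [Semiring R]

variable (R) in
def graphMatrix (f : ι → κ) : Matrix (ι × κ) ι R :=
  of fun p j => if p = (j, f j) then 1 else 0

theorem graphMatrix_mulVec_single [Fintype ι] (f : ι → κ) (j : ι) :
    graphMatrix R f *ᵥ Pi.single j 1 = (Pi.single (j, f j) 1 : ι × κ → R) := by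
  ext p
  simp [graphMatrix, Pi.single_apply]

theorem mul_graphMatrix_apply [Fintype ι] [Fintype κ] {m : Type*} (M : Matrix m (ι × κ) R)
    (f : ι → κ) (p : m) (j : ι) : (M * graphMatrix R f) p j = M p (j, f j) := by
  simp [mul_apply, graphMatrix]

theorem graphMatrix_mul_apply [Fintype ι] {m : Type*} (f : ι → κ) (N : Matrix ι m R)
    (k : ι) (w : κ) (l : m) :
    (graphMatrix R f * N) (k, w) l = if w = f k then N k l else 0 := by
  simp [mul_apply, graphMatrix, Prod.ext_iff, ite_and]

theorem kronecker_single_mul_graphMatrix [Fintype ι] [Fintype κ] {f : ι → κ}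
    {T : Matrix κ κ R} {i j : ι} (hT : T *ᵥ Pi.single (f j) 1 = Pi.single (f i) 1) :
    (single i j (1 : R) ⊗ₖ T) * graphMatrix R f = graphMatrix R f * single i j (1 : R) := by
  ext ⟨k, w⟩ l
  have hw := congrFun hT w
  rw [mulVec_single_one, col_apply, Pi.single_apply] at hw
  rw [mul_graphMatrix_apply, graphMatrix_mul_apply, kroneckerMap_apply, single_apply]
  by_cases hij : i = k ∧ j = l
  · obtain ⟨rfl, rfl⟩ := hij
    simp [hw]
  · simp [hij]

end GraphMatrix

section KrawtchoukChain

variable {n : ℕ}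

noncomputable def hypercubeAdjacency (n : ℕ) : Matrix (Fin n → ZMod 2) (Fin n → ZMod 2) ℂ :=
  ∑ s, (Equiv.addRight (Pi.single s 1)).permMatrix ℂ

theorem exp_hypercubeAdjacency (n : ℕ) :
    exp ((-Complex.I * ((Real.pi / 2 : ℝ) : ℂ)) • hypercubeAdjacency n) =
      (-Complex.I) ^ n • (Equiv.addRight 1).permMatrix ℂ := by
  have hc : -Complex.I * ((Real.pi / 2 : ℝ) : ℂ) = -(((Real.pi / 2 : ℝ) : ℂ) * Complex.I) := by
    ring
  have hcosh : Complex.cosh (-Complex.I * ((Real.pi / 2 : ℝ) : ℂ)) = 0 := by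
    rw [hc, Complex.cosh_neg, Complex.cosh_mul_I, ← Complex.ofReal_cos, Real.cos_pi_div_two,
      Complex.ofReal_zero]
  have hsinh : Complex.sinh (-Complex.I * ((Real.pi / 2 : ℝ) : ℂ)) = -Complex.I := by
    rw [hc, Complex.sinh_neg, Complex.sinh_mul_I, ← Complex.ofReal_sin, Real.sin_pi_div_two,
      Complex.ofReal_one, one_mul]
  have hflip (s : Fin n) : (Pi.single s 1 + Pi.single s 1 : Fin n → ZMod 2) = 0 := by
    rw [← Pi.single_add, show (1 : ZMod 2) + 1 = 0 from rfl, Pi.single_zero]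
  rw [hypercubeAdjacency, Finset.smul_sum,
    Matrix.exp_sum_smul_permMatrix_addRight _ hflip hcosh, hsinh, Finset.card_univ,
    Fintype.card_fin, Finset.univ_sum_single]
  rfl

noncomputable def krawtchoukChain (n : ℕ) : Matrix (Fin (n + 1)) (Fin (n + 1)) ℂ :=
  ∑ s : Fin n, (Real.sqrt ((((s : ℕ) + 1) * (n - (s : ℕ)) : ℕ)) : ℂ) •
    (single s.succ s.castSucc (1 : ℂ) + single s.castSucc s.succ (1 : ℂ))

theorem krawtchoukChain_apply (k m : Fin (n + 1)) :
    krawtchoukChain n k m =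
      (if (k : ℕ) = m + 1 then (√(((m + 1) * (n - m) : ℕ)) : ℂ) else 0) +
        (if (m : ℕ) = k + 1 then (√(((k + 1) * (n - k) : ℕ)) : ℂ) else 0) := by
  simp only [krawtchoukChain, Matrix.sum_apply, Matrix.smul_apply, Matrix.add_apply, single_apply,
    smul_eq_mul, Fin.ext_iff, Fin.val_succ, Fin.val_castSucc, mul_add, Finset.sum_add_distrib]
  rw [Fin.sum_univ_eq_sum_range (fun s => (√(((s + 1) * (n - s) : ℕ)) : ℂ) *
      if s + 1 = k ∧ s = m then 1 else 0),
    Fin.sum_univ_eq_sum_range (fun s => (√(((s + 1) * (n - s) : ℕ)) : ℂ) *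
      if s = k ∧ s + 1 = m then 1 else 0)]
  have hk := k.isLt
  have hm := m.isLt
  congr 1
  · rw [Finset.sum_eq_single (m : ℕ)] <;> grind
  · rw [Finset.sum_eq_single (k : ℕ)] <;> grind

/-- Row `k` is the normalised Dicke state of Hamming weight `k`. -/
noncomputable def dickeMatrix (n : ℕ) : Matrix (Fin (n + 1)) (Fin n → ZMod 2) ℂ :=
  of fun k x => if (k : ℕ) = hammingNorm x then (((√(n.choose k))⁻¹ : ℝ) : ℂ) else 0

theorem dickeMatrix_mulVec_single {x : Fin n → ZMod 2} {w : Fin (n + 1)}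
    (hw : hammingNorm x = w) :
    dickeMatrix n *ᵥ Pi.single x 1 = (((√(n.choose w))⁻¹ : ℝ) : ℂ) • Pi.single w 1 := by
  rw [mulVec_single_one]
  ext k
  simp only [col_apply, dickeMatrix, of_apply, hw, ← Fin.ext_iff, Pi.smul_apply, Pi.single_apply,
    smul_eq_mul, mul_ite, mul_one, mul_zero]
  split_ifs with h <;> simp [h]

theorem krawtchoukChain_mul_dickeMatrix_apply (k : Fin (n + 1)) (x : Fin n → ZMod 2) :
    (krawtchoukChain n * dickeMatrix n) k x =
      ((if (k : ℕ) = hammingNorm x + 1 then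
          (√(((hammingNorm x + 1) * (n - hammingNorm x) : ℕ)) : ℂ) else 0) +
        (if hammingNorm x = k + 1 then (√(((k + 1) * (n - k) : ℕ)) : ℂ) else 0)) *
        (((√(n.choose (hammingNorm x)))⁻¹ : ℝ) : ℂ) := by
  rw [mul_apply, Finset.sum_eq_single ⟨hammingNorm x, hammingNorm_lt_succ x⟩]
  · simp [dickeMatrix, krawtchoukChain_apply]
  · intro m _ hm
    simp [dickeMatrix, Fin.ext_iff.not.mp hm]
  · simp

theorem dickeMatrix_mul_hypercubeAdjacency_apply (k : Fin (n + 1)) (x : Fin n → ZMod 2) :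
    (dickeMatrix n * hypercubeAdjacency n) k x =
      ((if (k : ℕ) = hammingNorm x + 1 then ((n - hammingNorm x : ℕ) : ℂ) else 0) +
        (if hammingNorm x = k + 1 then (hammingNorm x : ℂ) else 0)) *
        (((√(n.choose k))⁻¹ : ℝ) : ℂ) := by
  have hneighbour (s : Fin n) : dickeMatrix n k (x - Pi.single s 1) =
      if x s = 0 then (if (k : ℕ) = hammingNorm x + 1 then (((√(n.choose k))⁻¹ : ℝ) : ℂ) else 0)
      else (if hammingNorm x = k + 1 then (((√(n.choose k))⁻¹ : ℝ) : ℂ) else 0) := by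
    by_cases hs : x s = 0
    · simp only [dickeMatrix, of_apply, hammingNorm_sub_single_of_eq_zero hs, if_pos hs]
    · have := hammingNorm_sub_single_add_one_of_ne_zero hs
      simp only [dickeMatrix, of_apply, if_neg hs,
        show (k : ℕ) = hammingNorm (x - Pi.single s 1) ↔ hammingNorm x = k + 1 by omega]
  have hzeros : (Finset.univ.filter (x · = 0)).card = n - hammingNorm x := by
    have := Finset.card_filter_add_card_filter_not (s := Finset.univ) (p := (x · = 0))
    simp only [Finset.card_univ, Fintype.card_fin, ← ne_eq] at this
    rw [hammingNorm]
    omega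
  simp only [hypercubeAdjacency, Matrix.mul_sum, Matrix.sum_apply, Equiv.Perm.permMatrix,
    PEquiv.mul_toMatrix_toPEquiv, submatrix_apply, id, Equiv.addRight_symm, Equiv.coe_addRight,
    ← sub_eq_add_neg, hneighbour]
  rw [Finset.sum_ite, Finset.sum_const, Finset.sum_const, hzeros, ← hammingNorm]
  split_ifs <;> simp [add_mul]

theorem sqrt_mul_inv_sqrt_choose {m : ℕ} (hm : m < n) :
    √(((m + 1) * (n - m) : ℕ)) * (√(n.choose m))⁻¹ =
      ((n - m : ℕ) : ℝ) * (√(n.choose (m + 1)))⁻¹ := by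
  rw [← div_eq_mul_inv, ← div_eq_mul_inv, Nat.cast_mul]
  refine Real.sqrt_mul_div_sqrt_of_mul_eq (by positivity) (by positivity)
    (by exact_mod_cast Nat.choose_pos hm.le) (by exact_mod_cast Nat.choose_pos hm) ?_
  exact_mod_cast (mul_comm _ _).trans ((Nat.choose_succ_right_eq n m).trans (mul_comm _ _))

theorem sqrt_mul_inv_sqrt_choose_succ {m : ℕ} (hm : m < n) :
    √(((m + 1) * (n - m) : ℕ)) * (√(n.choose (m + 1)))⁻¹ =
      ((m + 1 : ℕ) : ℝ) * (√(n.choose m))⁻¹ := by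
  rw [← div_eq_mul_inv, ← div_eq_mul_inv, Nat.cast_mul, mul_comm]
  refine Real.sqrt_mul_div_sqrt_of_mul_eq (by positivity) (by positivity)
    (by exact_mod_cast Nat.choose_pos hm) (by exact_mod_cast Nat.choose_pos hm.le) ?_
  exact_mod_cast ((mul_comm _ _).trans ((Nat.choose_succ_right_eq n m).trans (mul_comm _ _))).symm

theorem krawtchoukChain_mul_dickeMatrix :
    krawtchoukChain n * dickeMatrix n = dickeMatrix n * hypercubeAdjacency n := by
  ext k x
  rw [krawtchoukChain_mul_dickeMatrix_apply, dickeMatrix_mul_hypercubeAdjacency_apply]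
  have hx := hammingNorm_lt_succ x
  have hk := k.isLt
  by_cases hup : (k : ℕ) = hammingNorm x + 1
  · have hdown : hammingNorm x ≠ k + 1 := by omega
    simp only [if_pos hup, if_neg hdown, add_zero]
    rw [hup]
    exact_mod_cast sqrt_mul_inv_sqrt_choose (m := hammingNorm x) (by omega)
  · by_cases hdown : hammingNorm x = k + 1
    · simp only [if_neg hup, if_pos hdown, zero_add]
      rw [hdown]
      exact_mod_cast sqrt_mul_inv_sqrt_choose_succ (m := k) (by omega)
    · simp only [if_neg hup, if_neg hdown, add_zero, zero_mul]

end KrawtchoukChain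

section InnerProductClock

variable {n : ℕ}

def ipFlip (s : Fin n) (q : (Fin n → ZMod 2) × (Fin n → ZMod 2) × ZMod 2) :
    (Fin n → ZMod 2) × (Fin n → ZMod 2) × ZMod 2 :=
  (q.1, q.2.1, q.2.2 + q.1 s * q.2.1 s)

theorem ipFlip_involutive (s : Fin n) : Function.Involutive (ipFlip s) := fun q => by
  simp [ipFlip, add_assoc, CharTwo.add_self_eq_zero]

theorem ipStep_mulVec_single (s : Fin n) (q : (Fin n → ZMod 2) × (Fin n → ZMod 2) × ZMod 2) :
    ipStep n s *ᵥ Pi.single q 1 = Pi.single (ipFlip s q) 1 := by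
  ext p
  simp [ipStep, ipFlip, Pi.single_apply]

theorem conjTranspose_ipStep (s : Fin n) : (ipStep n s)ᴴ = ipStep n s := by
  ext p q
  simp only [conjTranspose_apply, ipStep, of_apply]
  change star (if q = ipFlip s p then (1 : ℂ) else 0) = if p = ipFlip s q then 1 else 0
  simp_rw [show q = ipFlip s p ↔ p = ipFlip s q by rw [eq_comm, (ipFlip_involutive s).eq_iff]]
  split_ifs <;> simp

def ipClockState (y z : Fin n → ZMod 2) (b : ZMod 2) (k : Fin (n + 1)) :
    (Fin n → ZMod 2) × (Fin n → ZMod 2) × ZMod 2 :=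
  (y, z, b + Fin.partialSum (y * z) k)

theorem ipFlip_ipClockState_castSucc (y z : Fin n → ZMod 2) (b : ZMod 2) (s : Fin n) :
    ipFlip s (ipClockState y z b s.castSucc) = ipClockState y z b s.succ := by
  simp [ipFlip, ipClockState, Fin.partialSum_succ, add_assoc]

theorem ipHam_mul_graphMatrix (y z : Fin n → ZMod 2) (b : ZMod 2) :
    ipHam n * graphMatrix ℂ (ipClockState y z b) =
      graphMatrix ℂ (ipClockState y z b) * krawtchoukChain n := by
  have hup (s : Fin n) := kronecker_single_mul_graphMatrix (f := ipClockState y z b)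
    (i := s.succ) (j := s.castSucc) (T := ipStep n s)
    (by rw [ipStep_mulVec_single, ipFlip_ipClockState_castSucc])
  have hdown (s : Fin n) := kronecker_single_mul_graphMatrix (f := ipClockState y z b)
    (i := s.castSucc) (j := s.succ) (T := (ipStep n s)ᴴ)
    (by rw [conjTranspose_ipStep, ipStep_mulVec_single, ← ipFlip_ipClockState_castSucc,
      ipFlip_involutive])
  simp only [ipHam, krawtchoukChain, Matrix.sum_mul, Matrix.mul_sum, Matrix.smul_mul,
    Matrix.mul_smul, Matrix.add_mul, Matrix.mul_add, hup, hdown]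

end InnerProductClock

theorem ipHam_evolution_general (n : ℕ) :
    ∀ (y z : Fin n → ZMod 2) (b : ZMod 2),
      (NormedSpace.exp ((-Complex.I * ((Real.pi / 2 : ℝ) : ℂ)) • ipHam n)) *ᵥ
          (Pi.single ((0 : Fin (n + 1)), (y, z, b)) 1) =
        (-Complex.I) ^ n •
          (Pi.single ((Fin.last n), (y, z, b + ∑ s : Fin n, y s * z s)) 1 :
            (Fin (n + 1)) × ((Fin n → ZMod 2) × (Fin n → ZMod 2) × ZMod 2) → ℂ) := by
  intro y z b
  set c : ℂ := -Complex.I * ((Real.pi / 2 : ℝ) : ℂ)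
  set P := graphMatrix ℂ (ipClockState y z b) * dickeMatrix n
  have hP : ipHam n * P = P * hypercubeAdjacency n := by
    rw [← Matrix.mul_assoc, ipHam_mul_graphMatrix, Matrix.mul_assoc,
      krawtchoukChain_mul_dickeMatrix, Matrix.mul_assoc]
  have hexp : exp (c • ipHam n) * P = P * exp (c • hypercubeAdjacency n) :=
    Matrix.exp_mul_eq_mul_exp (by rw [Matrix.smul_mul, hP, Matrix.mul_smul])
  have hstart : P *ᵥ Pi.single 0 1 = Pi.single ((0 : Fin (n + 1)), (y, z, b)) 1 := by
    rw [← mulVec_mulVec, dickeMatrix_mulVec_single (w := 0) hammingNorm_zero, mulVec_smul,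
      graphMatrix_mulVec_single]
    simp [ipClockState]
  have hend : P *ᵥ Pi.single (-1) 1 =
      Pi.single ((Fin.last n), (y, z, b + ∑ s : Fin n, y s * z s)) 1 := by
    have hw : hammingNorm (-1 : Fin n → ZMod 2) = Fin.last n := by simp [hammingNorm]
    rw [← mulVec_mulVec, dickeMatrix_mulVec_single hw, mulVec_smul, graphMatrix_mulVec_single]
    simp [ipClockState, Fin.partialSum_last]
  rw [← hstart, mulVec_mulVec, hexp, ← mulVec_mulVec, exp_hypercubeAdjacency, smul_mulVec,
    permMatrix_addRight_mulVec_single, zero_sub, mulVec_smul, hend]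

/-- The dynamics of the inner-product clock Hamiltonian at time `π/2` maps
`e₀ ⊗ |y⟩ ⊗ |z⟩ ⊗ |b⟩` to `(−i)^n · e_n ⊗ |y⟩ ⊗ |z⟩ ⊗ |b ⊕ (⊕_s y_s ∧ z_s)⟩`. -/
theorem ipHam_evolution (n : ℕ) (hn : 1 ≤ n) :
    ∀ (y z : Fin n → ZMod 2) (b : ZMod 2),
      (NormedSpace.exp ((-Complex.I * ((Real.pi / 2 : ℝ) : ℂ)) • ipHam n)) *ᵥ
          (Pi.single ((0 : Fin (n + 1)), (y, z, b)) 1) =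
        (-Complex.I) ^ n •
          (Pi.single ((Fin.last n), (y, z, b + ∑ s : Fin n, y s * z s)) 1 :
            (Fin (n + 1)) × ((Fin n → ZMod 2) × (Fin n → ZMod 2) × ZMod 2) → ℂ) :=
  ipHam_evolution_general n
end

section
/- Let d, J ∈ ℕ with J ≥ 1, U_1, …, U_J unitary d×d matrices, β_j > 0 with s = Σ_j β_j ≥ 1, and suppose V := Σ_{j=1}^{J} β_j U_j is unitary. Let G be any unitary on ℂ^J with G e_0 = (1/√s) Σ_j √β_j e_j, let select(U) = Σ_j E_{j,j} ⊗ U_j, and W = (G† ⊗ I_d) · select(U) · (G ⊗ I_d). Then for every unit vector ψ ∈ ℂ^d there is a vector φ ∈ ℂ^J ⊗ ℂ^d with W(e_0 ⊗ ψ) = (1/s)(e_0 ⊗ Vψ) + φ, such that (E_{0,0} ⊗ I_d) φ = 0 and ‖φ‖ = √(s² − 1)/s. -/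
/-!
`W` is unitary, so `W (e₀ ⊗ ψ)` is a unit vector. Its `e₀`-block is
`∑ⱼ |G j 0|² Uⱼ ψ = (1/s) V ψ`, so `φ := W (e₀ ⊗ ψ) - (1/s) (e₀ ⊗ V ψ)` vanishes on that block
while `(1/s) (e₀ ⊗ V ψ)` lives on it. By Pythagoras `‖φ‖² = 1 - ‖V ψ‖² / s² = 1 - 1 / s²`.
-/

open Matrix Kronecker

/-- The Kronecker (tensor) product of two vectors. -/
def vecKron {m d : Type*} (v : m → ℂ) (w : d → ℂ) : m × d → ℂ :=
  fun p => v p.1 * w p.2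

theorem kronecker_one_mulVec_apply {R m n : Type*} [Semiring R] [Fintype m] [Fintype n]
    [DecidableEq n] (A : Matrix m m R) (v : m × n → R) (i : m) (b : n) :
    ((A ⊗ₖ (1 : Matrix n n R)) *ᵥ v) (i, b) = ∑ k, A i k * v (k, b) := by
  simp [mulVec, dotProduct, Fintype.sum_prod_type, one_apply]

theorem single_kronecker_one_mulVec_eq_zero {R m n : Type*} [Semiring R] [Fintype m]
    [DecidableEq m] [Fintype n] [DecidableEq n] {i : m} {v : m × n → R}
    (hv : ∀ b, v (i, b) = 0) : (single i i 1 ⊗ₖ (1 : Matrix n n R)) *ᵥ v = 0 := by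
  ext ⟨k, b⟩
  simp [kronecker_one_mulVec_apply, single_apply, ite_and, hv]

theorem sum_norm_sq_mulVec_of_mem_unitaryGroup {𝕜 n : Type*} [RCLike 𝕜] [Fintype n]
    [DecidableEq n] {A : Matrix n n 𝕜} (hA : A ∈ unitaryGroup n 𝕜) (v : n → 𝕜) :
    ∑ i, ‖(A *ᵥ v) i‖ ^ 2 = ∑ i, ‖v i‖ ^ 2 := by
  have hA' : toEuclideanCLM (n := n) (𝕜 := 𝕜) A ∈ unitary _ := by
    constructor <;> rw [← map_star, ← map_mul, ← map_one (toEuclideanCLM (n := n) (𝕜 := 𝕜))]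
    exacts [congrArg _ hA.1, congrArg _ hA.2]
  have h := ContinuousLinearMap.norm_map_of_mem_unitary hA' (WithLp.toLp 2 v)
  rw [toEuclideanCLM_toLp] at h
  have h2 := congrArg (· ^ 2) h
  simp only [PiLp.norm_sq_eq_of_L2] at h2
  exact h2

theorem sum_norm_sq_add_of_disjoint {E ι : Type*} [Fintype ι] [SeminormedAddCommGroup E]
    {a b : ι → E} (h : ∀ i, a i = 0 ∨ b i = 0) :
    ∑ i, ‖(a + b) i‖ ^ 2 = ∑ i, ‖a i‖ ^ 2 + ∑ i, ‖b i‖ ^ 2 := by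
  rw [← Finset.sum_add_distrib]
  refine Finset.sum_congr rfl fun i _ => ?_
  rcases h i with h | h <;> simp [h]

theorem sum_norm_sq_vecKron {m n : Type*} [Fintype m] [Fintype n] (u : m → ℂ) (w : n → ℂ) :
    ∑ p, ‖vecKron u w p‖ ^ 2 = (∑ i, ‖u i‖ ^ 2) * ∑ b, ‖w b‖ ^ 2 := by
  simp [vecKron, Fintype.sum_prod_type, mul_pow, Finset.sum_mul_sum]

section Select

variable {R m n : Type*} [Fintype m] [DecidableEq m]

def selectMatrix [Semiring R] (U : m → Matrix n n R) : Matrix (m × n) (m × n) R :=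
  ∑ j, single j j 1 ⊗ₖ U j

theorem selectMatrix_apply [Semiring R] (U : m → Matrix n n R) (i k : m) (b c : n) :
    selectMatrix U (i, b) (k, c) = if i = k then U i b c else 0 := by
  simp [selectMatrix, Matrix.sum_apply, single_apply, ite_and]

theorem conjTranspose_selectMatrix [Semiring R] [StarRing R] (U : m → Matrix n n R) :
    (selectMatrix U)ᴴ = selectMatrix fun j => (U j)ᴴ := by
  ext ⟨i, b⟩ ⟨k, c⟩
  simp only [conjTranspose_apply, selectMatrix_apply, eq_comm (a := k)]
  split_ifs with h <;> simp [h]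

theorem selectMatrix_one [Semiring R] [DecidableEq n] :
    selectMatrix (fun _ : m => (1 : Matrix n n R)) = 1 := by
  ext ⟨i, b⟩ ⟨k, c⟩
  simp only [selectMatrix_apply, one_apply, Prod.mk.injEq]
  split_ifs <;> simp_all

variable [Fintype n]

theorem selectMatrix_mul_selectMatrix [Semiring R] (A B : m → Matrix n n R) :
    selectMatrix A * selectMatrix B = selectMatrix fun j => A j * B j := by
  ext ⟨i, b⟩ ⟨k, c⟩
  simp only [mul_apply, selectMatrix_apply, Fintype.sum_prod_type]
  split_ifs with h <;> simp [h]

theorem selectMatrix_mulVec_apply [Semiring R] (U : m → Matrix n n R) (v : m × n → R)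
    (i : m) (b : n) : (selectMatrix U *ᵥ v) (i, b) = (U i *ᵥ fun c => v (i, c)) b := by
  simp [mulVec, dotProduct, selectMatrix_apply, Fintype.sum_prod_type, ite_mul]

theorem selectMatrix_mem_unitaryGroup [CommRing R] [StarRing R] [DecidableEq n]
    {U : m → Matrix n n R} (hU : ∀ j, U j ∈ unitaryGroup n R) :
    selectMatrix U ∈ unitaryGroup (m × n) R := by
  have hU' : ∀ j, U j * (U j)ᴴ = 1 := fun j => mem_unitaryGroup_iff.mp (hU j)
  rw [mem_unitaryGroup_iff, star_eq_conjTranspose, conjTranspose_selectMatrix,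
    selectMatrix_mul_selectMatrix]
  simp only [hU', selectMatrix_one]

end Select

section LCU

variable {m n : Type*} [Fintype m] [DecidableEq m] [Fintype n] [DecidableEq n]

def lcuMatrix {R : Type*} [Semiring R] [StarRing R] (G : Matrix m m R) (U : m → Matrix n n R) :
    Matrix (m × n) (m × n) R :=
  (Gᴴ ⊗ₖ (1 : Matrix n n R)) * selectMatrix U * (G ⊗ₖ (1 : Matrix n n R))

theorem lcuMatrix_mem_unitaryGroup {R : Type*} [CommRing R] [StarRing R] {G : Matrix m m R}
    (hG : G ∈ unitaryGroup m R) {U : m → Matrix n n R} (hU : ∀ j, U j ∈ unitaryGroup n R) :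
    lcuMatrix G U ∈ unitaryGroup (m × n) R := by
  have h1 : (1 : Matrix n n R) ∈ unitaryGroup n R := one_mem _
  refine mul_mem (mul_mem ?_ (selectMatrix_mem_unitaryGroup hU)) (kronecker_mem_unitary hG h1)
  exact kronecker_mem_unitary (Unitary.star_mem hG) h1

theorem lcuMatrix_mulVec_vecKron_apply_self (G : Matrix m m ℂ) (U : m → Matrix n n ℂ)
    (i : m) (ψ : n → ℂ) (b : n) :
    (lcuMatrix G U *ᵥ vecKron (Pi.single i 1) ψ) (i, b) =
      ((∑ j, (star (G j i) * G j i) • U j) *ᵥ ψ) b := by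
  have hcol : ∀ k, (fun c => ∑ l, G k l * vecKron (Pi.single i 1) ψ (l, c)) = G k i • ψ := by
    intro k
    ext c
    simp [vecKron, Pi.single_apply]
  simp only [lcuMatrix, ← mulVec_mulVec, kronecker_one_mulVec_apply, selectMatrix_mulVec_apply,
    hcol]
  simp [mulVec_smul, sum_mulVec, smul_mulVec, mul_assoc]

end LCU

theorem lcu_action_general (d J : ℕ) (hJ : 0 < J)
    (U : Fin J → Matrix (Fin d) (Fin d) ℂ)
    (hU : ∀ j, U j ∈ Matrix.unitaryGroup (Fin d) ℂ)
    (β : Fin J → ℝ) (hβ : ∀ j, 0 < β j) (s : ℝ) (hs1 : 1 ≤ s)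
    (hV : (∑ j : Fin J, (β j : ℂ) • U j) ∈ Matrix.unitaryGroup (Fin d) ℂ)
    (G : Matrix (Fin J) (Fin J) ℂ) (hG : G ∈ Matrix.unitaryGroup (Fin J) ℂ)
    (hGe : G *ᵥ (Pi.single (⟨0, hJ⟩ : Fin J) 1) =
      fun j => ((Real.sqrt (β j) / Real.sqrt s : ℝ) : ℂ))
    (W : Matrix (Fin J × Fin d) (Fin J × Fin d) ℂ)
    (hW : W = (Gᴴ ⊗ₖ (1 : Matrix (Fin d) (Fin d) ℂ)) *
        (∑ j : Fin J, Matrix.single j j (1 : ℂ) ⊗ₖ U j) *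
        (G ⊗ₖ (1 : Matrix (Fin d) (Fin d) ℂ)))
    (ψ : Fin d → ℂ) (hψ : ∑ b, ‖ψ b‖ ^ 2 = 1) :
    ∃ φ : Fin J × Fin d → ℂ,
      W *ᵥ vecKron (Pi.single (⟨0, hJ⟩ : Fin J) 1) ψ =
          ((s : ℂ))⁻¹ • vecKron (Pi.single (⟨0, hJ⟩ : Fin J) 1)
            ((∑ j : Fin J, (β j : ℂ) • U j) *ᵥ ψ) + φ ∧
        ((Matrix.single (⟨0, hJ⟩ : Fin J) (⟨0, hJ⟩ : Fin J) (1 : ℂ)) ⊗ₖ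
            (1 : Matrix (Fin d) (Fin d) ℂ)) *ᵥ φ = 0 ∧
        Real.sqrt (∑ p, ‖φ p‖ ^ 2) = Real.sqrt (s ^ 2 - 1) / s := by
  replace hW : W = lcuMatrix G U := hW
  subst hW
  set i : Fin J := ⟨0, hJ⟩
  set V := ∑ j : Fin J, (β j : ℂ) • U j
  set x := lcuMatrix G U *ᵥ vecKron (Pi.single i 1) ψ
  set a := ((s : ℂ))⁻¹ • vecKron (Pi.single i 1) (V *ᵥ ψ)
  have hs0 : 0 < s := by linarith
  have hweight : ∀ j, star (G j i) * G j i = (β j : ℂ) / s := by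
    intro j
    have hGj : G j i = ((√(β j) / √s : ℝ) : ℂ) := by
      simpa [mulVec_single_one] using congrFun hGe j
    rw [hGj, Complex.star_def, Complex.conj_ofReal, ← Complex.ofReal_mul, div_mul_div_comm,
      Real.mul_self_sqrt (hβ j).le, Real.mul_self_sqrt hs0.le, Complex.ofReal_div]
  have hblock : ∀ b, x (i, b) = a (i, b) := by
    intro b
    have hmix : ∑ j, ((β j : ℂ) / s) • U j = (s : ℂ)⁻¹ • V := by
      simp only [V, Finset.smul_sum, smul_smul, div_eq_inv_mul]
    simp only [x, lcuMatrix_mulVec_vecKron_apply_self, hweight, hmix, smul_mulVec]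
    simp [a, vecKron]
  have he : ∑ j, ‖(Pi.single i 1 : Fin J → ℂ) j‖ ^ 2 = 1 := by
    rw [Finset.sum_eq_single i] <;> simp +contextual
  have hx : ∑ p, ‖x p‖ ^ 2 = 1 := by
    rw [sum_norm_sq_mulVec_of_mem_unitaryGroup (lcuMatrix_mem_unitaryGroup hG hU),
      sum_norm_sq_vecKron, he, hψ, one_mul]
  have ha : ∑ p, ‖a p‖ ^ 2 = s⁻¹ ^ 2 := by
    simp only [a, Pi.smul_apply, norm_smul, mul_pow, ← Finset.mul_sum, sum_norm_sq_vecKron,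
      sum_norm_sq_mulVec_of_mem_unitaryGroup hV, he, hψ]
    simp [abs_of_pos hs0]
  have hpyth : ∑ p, ‖x p‖ ^ 2 = ∑ p, ‖a p‖ ^ 2 + ∑ p, ‖(x - a) p‖ ^ 2 := by
    conv_lhs => rw [← add_sub_cancel a x]
    refine sum_norm_sq_add_of_disjoint fun ⟨j, b⟩ => ?_
    by_cases hj : j = i
    · right
      simp [hj, hblock]
    · left
      simp [a, vecKron, hj]
  refine ⟨x - a, (add_sub_cancel a x).symm,
    single_kronecker_one_mulVec_eq_zero fun b => sub_eq_zero.2 (hblock b), ?_⟩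
  have hφ : ∑ p, ‖(x - a) p‖ ^ 2 = (√(s ^ 2 - 1) / s) ^ 2 := by
    rw [div_pow, Real.sq_sqrt (by nlinarith), show ∑ p, ‖(x - a) p‖ ^ 2 = 1 - s⁻¹ ^ 2 by linarith]
    field_simp
  rw [hφ, Real.sqrt_sq (by positivity)]

/-- Action of the LCU circuit `W = (G† ⊗ I_d) · select(U) · (G ⊗ I_d)` on `e₀ ⊗ ψ`:
`W(e₀ ⊗ ψ) = (1/s)(e₀ ⊗ Vψ) + φ` with `(E_{0,0} ⊗ I_d) φ = 0` and `‖φ‖ = √(s²−1)/s`. -/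
theorem lcu_action (d J : ℕ) (hJ : 0 < J)
    (U : Fin J → Matrix (Fin d) (Fin d) ℂ)
    (hU : ∀ j, U j ∈ Matrix.unitaryGroup (Fin d) ℂ)
    (β : Fin J → ℝ) (hβ : ∀ j, 0 < β j) (s : ℝ) (hs : s = ∑ j, β j) (hs1 : 1 ≤ s)
    (hV : (∑ j : Fin J, (β j : ℂ) • U j) ∈ Matrix.unitaryGroup (Fin d) ℂ)
    (G : Matrix (Fin J) (Fin J) ℂ) (hG : G ∈ Matrix.unitaryGroup (Fin J) ℂ)
    (hGe : G *ᵥ (Pi.single (⟨0, hJ⟩ : Fin J) 1) =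
      fun j => ((Real.sqrt (β j) / Real.sqrt s : ℝ) : ℂ))
    (W : Matrix (Fin J × Fin d) (Fin J × Fin d) ℂ)
    (hW : W = (Gᴴ ⊗ₖ (1 : Matrix (Fin d) (Fin d) ℂ)) *
        (∑ j : Fin J, Matrix.single j j (1 : ℂ) ⊗ₖ U j) *
        (G ⊗ₖ (1 : Matrix (Fin d) (Fin d) ℂ)))
    (ψ : Fin d → ℂ) (hψ : ∑ b, ‖ψ b‖ ^ 2 = 1) :
    ∃ φ : Fin J × Fin d → ℂ,
      W *ᵥ vecKron (Pi.single (⟨0, hJ⟩ : Fin J) 1) ψ =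
          ((s : ℂ))⁻¹ • vecKron (Pi.single (⟨0, hJ⟩ : Fin J) 1)
            ((∑ j : Fin J, (β j : ℂ) • U j) *ᵥ ψ) + φ ∧
        ((Matrix.single (⟨0, hJ⟩ : Fin J) (⟨0, hJ⟩ : Fin J) (1 : ℂ)) ⊗ₖ
            (1 : Matrix (Fin d) (Fin d) ℂ)) *ᵥ φ = 0 ∧
        Real.sqrt (∑ p, ‖φ p‖ ^ 2) = Real.sqrt (s ^ 2 - 1) / s :=
  lcu_action_general d J hJ U hU β hβ s hs1 hV G hG hGe W hW ψ hψ
end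

section
/- Let W be a unitary on ℂ^a ⊗ ℂ^d and V a unitary on ℂ^d such that the compression of W equals V/2, i.e., (e_0† ⊗ I_d) W (e_0 ⊗ I_d) = (1/2)V. Let R = I − 2(E_{0,0} ⊗ I_d) be the reflection about the subspace e_0 ⊗ ℂ^d. Then for every ψ ∈ ℂ^d, −W R W† R W (e_0 ⊗ ψ) = e_0 ⊗ Vψ. -/
open Matrix Kronecker

/-- The isometry `(v ⊗ I_d) : ℂ^d → ℂ^m ⊗ ℂ^d`, `ψ ↦ v ⊗ ψ`, as a matrix. -/
def embedVec {m d : Type*} [DecidableEq d] (v : m → ℂ) : Matrix (m × d) d ℂ :=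
  Matrix.of fun p b => v p.1 * (if p.2 = b then 1 else 0)

/-! Write `P = e₀ ⊗ I_d`, an isometry, and `R = 1 - 2PP†`. The hypothesis says `P†WP = V/2`, so
`R(WP) = WP - PV`, hence `W†RWP = P - W†PV`. Since `RP = -P` and `P†W†P = V†/2`, the second
reflection sends `P - W†PV` to `-W†PV`, and applying `-W` leaves `PV`. -/

section Reflection

variable {𝕜 n m : Type*} [RCLike 𝕜] [Fintype n] [DecidableEq n] [Fintype m]

def rangeReflection (P : Matrix n m 𝕜) : Matrix n n 𝕜 := 1 - (2 : 𝕜) • (P * Pᴴ)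

theorem rangeReflection_mul (P X : Matrix n m 𝕜) :
    rangeReflection P * X = X - (2 : 𝕜) • (P * (Pᴴ * X)) := by
  rw [rangeReflection, Matrix.sub_mul, Matrix.one_mul, Matrix.smul_mul, Matrix.mul_assoc]

variable [DecidableEq m]

theorem rangeReflection_mul_self {P : Matrix n m 𝕜} (hP : Pᴴ * P = 1) :
    rangeReflection P * P = -P := by
  rw [rangeReflection_mul, hP, Matrix.mul_one, two_smul]
  abel

theorem neg_mul_rangeReflection_conj_mul {P : Matrix n m 𝕜} (hP : Pᴴ * P = 1)
    {W : Matrix n n 𝕜} (hW : W ∈ unitaryGroup n 𝕜) {V : Matrix m m 𝕜}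
    (hV : V ∈ unitaryGroup m 𝕜) (hcomp : Pᴴ * W * P = (2⁻¹ : 𝕜) • V) :
    -(W * rangeReflection P * Wᴴ * rangeReflection P * W) * P = P * V := by
  set R := rangeReflection P
  have hWW : W * Wᴴ = 1 := mem_unitaryGroup_iff.mp hW
  have hWhW : Wᴴ * W = 1 := mem_unitaryGroup_iff'.mp hW
  have hVhV : Vᴴ * V = 1 := mem_unitaryGroup_iff'.mp hV
  have hcomp' : Pᴴ * (Wᴴ * P) = (2⁻¹ : 𝕜) • Vᴴ := by
    simpa [Matrix.mul_assoc] using congrArg conjTranspose hcomp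
  have hRWP : R * (W * P) = W * P - P * V := by
    rw [rangeReflection_mul, ← Matrix.mul_assoc Pᴴ, hcomp, Matrix.mul_smul, smul_smul]
    norm_num
  have hRWhPV : R * (Wᴴ * (P * V)) = Wᴴ * (P * V) - P := by
    rw [rangeReflection_mul, ← Matrix.mul_assoc Wᴴ, ← Matrix.mul_assoc Pᴴ, hcomp',
      Matrix.smul_mul, hVhV, Matrix.mul_smul, smul_smul, Matrix.mul_one]
    norm_num
  calc -(W * R * Wᴴ * R * W) * P = -(W * (R * (Wᴴ * (R * (W * P))))) := by
        simp only [Matrix.neg_mul, Matrix.mul_assoc]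
    _ = -(W * (R * P - R * (Wᴴ * (P * V)))) := by
        rw [hRWP, Matrix.mul_sub, ← Matrix.mul_assoc Wᴴ W, hWhW, Matrix.one_mul, Matrix.mul_sub]
    _ = -(W * -(Wᴴ * (P * V))) := by
        rw [rangeReflection_mul_self hP, hRWhPV]
        congr 2
        abel
    _ = P * V := by rw [Matrix.mul_neg, neg_neg, ← Matrix.mul_assoc, hWW, Matrix.one_mul]

end Reflection

section Embedding

variable {m d : Type*} [Fintype d] [DecidableEq d]

theorem embedVec_mulVec (v : m → ℂ) (ψ : d → ℂ) : embedVec v *ᵥ ψ = vecKron v ψ := by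
  ext p
  simp [embedVec, vecKron, mulVec, dotProduct, mul_comm]

theorem embedVec_mul_conjTranspose_embedVec [DecidableEq m] (v w : m → ℂ) :
    embedVec (d := d) v * (embedVec (d := d) w)ᴴ = vecMulVec v (star w) ⊗ₖ 1 := by
  ext p q
  by_cases hpq : p.2 = q.2
  · simp [Matrix.mul_apply, embedVec, vecMulVec, hpq, one_apply]
  · simp [Matrix.mul_apply, embedVec, vecMulVec, hpq, Ne.symm hpq]

theorem rangeReflection_embedVec_single [DecidableEq m] (i : m) :
    rangeReflection (embedVec (d := d) (Pi.single i (1 : ℂ))) =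
      1 - (2 : ℂ) • (single i i 1 ⊗ₖ 1) := by
  rw [rangeReflection, embedVec_mul_conjTranspose_embedVec, single_eq_single_vecMulVec_single,
    Pi.star_single, star_one]

variable [Fintype m]

theorem conjTranspose_embedVec_mul_embedVec (v w : m → ℂ) :
    (embedVec (d := d) v)ᴴ * embedVec (d := d) w = (star v ⬝ᵥ w) • 1 := by
  ext b c
  by_cases hbc : b = c
  · subst hbc
    simp [Matrix.mul_apply, embedVec, dotProduct, Fintype.sum_prod_type, apply_ite]
  · simp [Matrix.mul_apply, embedVec, Fintype.sum_prod_type, apply_ite, hbc, Ne.symm hbc]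

theorem conjTranspose_embedVec_single_mul_self [DecidableEq m] (i : m) :
    (embedVec (d := d) (Pi.single i 1))ᴴ * embedVec (d := d) (Pi.single i 1) = 1 := by
  simp [conjTranspose_embedVec_mul_embedVec]

end Embedding

/-- Oblivious amplitude amplification: if the compression of a unitary `W` equals `V/2`
for a unitary `V`, and `R = I − 2(E_{0,0} ⊗ I_d)`, then
`−W R W† R W (e₀ ⊗ ψ) = e₀ ⊗ Vψ` for every `ψ`. -/
theorem oblivious_amplitude_amplification (a d : ℕ) (ha : 0 < a)
    (W : Matrix (Fin a × Fin d) (Fin a × Fin d) ℂ)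
    (hW : W ∈ Matrix.unitaryGroup (Fin a × Fin d) ℂ)
    (V : Matrix (Fin d) (Fin d) ℂ) (hV : V ∈ Matrix.unitaryGroup (Fin d) ℂ)
    (hcomp : (embedVec (d := Fin d) (Pi.single (⟨0, ha⟩ : Fin a) 1))ᴴ * W *
        embedVec (Pi.single (⟨0, ha⟩ : Fin a) 1) = (2 : ℂ)⁻¹ • V)
    (R : Matrix (Fin a × Fin d) (Fin a × Fin d) ℂ)
    (hR : R = 1 - (2 : ℂ) •
      ((Matrix.single (⟨0, ha⟩ : Fin a) (⟨0, ha⟩ : Fin a) (1 : ℂ)) ⊗ₖ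
        (1 : Matrix (Fin d) (Fin d) ℂ))) :
    ∀ ψ : Fin d → ℂ,
      (-(W * R * Wᴴ * R * W)) *ᵥ vecKron (Pi.single (⟨0, ha⟩ : Fin a) 1) ψ =
        vecKron (Pi.single (⟨0, ha⟩ : Fin a) 1) (V *ᵥ ψ) := by
  intro ψ
  rw [hR, ← rangeReflection_embedVec_single, ← embedVec_mulVec, ← embedVec_mulVec, mulVec_mulVec,
    mulVec_mulVec, neg_mul_rangeReflection_conj_mul (conjTranspose_embedVec_single_mul_self _) hW
      hV hcomp]
end

section
/- Let m, a, d ∈ ℕ with m ≥ 1. For i = 1, …, m let W_i be a unitary on ℂ^a ⊗ ℂ^d, A_i a d×d matrix, and α_i > 0 such that the compression of W_i equals A_i/α_i, i.e., (e_0† ⊗ I_d) W_i (e_0 ⊗ I_d) = A_i/α_i. Set α = Σ_i α_i and g = (1/√α) Σ_{i=1}^{m} √α_i e_i ∈ ℂ^m. Then (g† ⊗ e_0† ⊗ I_d) (Σ_{i=1}^{m} E_{i,i} ⊗ W_i) (g ⊗ e_0 ⊗ I_d) = (Σ_{i=1}^{m} A_i)/α; that is, a weighted linear combination of block encodings is a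 block encoding of the sum with normalization α. -/
open Matrix Kronecker

/-!
Compressing the block-diagonal unitary `Σ_i E_{i,i} ⊗ W_i` with the state `g` of the selection
register returns `Σ_i |g_i|² W_i`, and `|g_i|² = α_i / α`. Compressing further with `e₀` turns each
`W_i` into `A_i / α_i`, so the weights `α_i` cancel and `(Σ_i A_i) / α` remains.
-/

section Compression

variable {m n : Type*} [Fintype m] [Fintype n] [DecidableEq n]

lemma conjTranspose_embedVec_mul_mul_embedVec_apply (v : m → ℂ)
    (M : Matrix (m × n) (m × n) ℂ) (b b' : n) :
    ((embedVec (d := n) v)ᴴ * M * embedVec (d := n) v) b b'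
      = ∑ i, ∑ j, star (v i) * v j * M (i, b) (j, b') := by
  simp only [mul_apply, embedVec, conjTranspose_apply, of_apply, Fintype.sum_prod_type,
    apply_ite (star : ℂ → ℂ), star_zero, mul_ite, ite_mul, mul_one, mul_zero, zero_mul,
    Finset.sum_ite_eq', Finset.mem_univ, if_true, Finset.sum_mul]
  rw [Finset.sum_comm]
  refine Finset.sum_congr rfl fun i _ => Finset.sum_congr rfl fun j _ => ?_
  ring

omit [Fintype n] [DecidableEq n] in
lemma sum_single_kronecker_apply [DecidableEq m] (W : m → Matrix n n ℂ) (i j : m) (p q : n) :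
    (∑ k, single k k (1 : ℂ) ⊗ₖ W k) (i, p) (j, q) = if i = j then W i p q else 0 := by
  simp only [Matrix.sum_apply, kroneckerMap_apply, single_apply]
  split_ifs with h
  · subst h
    simp
  · exact Finset.sum_eq_zero fun k _ => by grind

lemma conjTranspose_embedVec_mul_sum_single_kronecker_mul_embedVec [DecidableEq m]
    (g : m → ℂ) (W : m → Matrix n n ℂ) :
    (embedVec (d := n) g)ᴴ * (∑ k, single k k (1 : ℂ) ⊗ₖ W k) * embedVec (d := n) g
      = ∑ k, (star (g k) * g k) • W k := by
  ext p q
  simp_rw [conjTranspose_embedVec_mul_mul_embedVec_apply, sum_single_kronecker_apply, mul_ite,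
    mul_zero, Finset.sum_ite_eq, Finset.mem_univ, if_true, Matrix.sum_apply, Matrix.smul_apply,
    smul_eq_mul]

end Compression

lemma star_ofReal_sqrt_div_sqrt_mul_self {x y : ℝ} (hx : 0 ≤ x) (hy : 0 ≤ y) :
    star ((√x / √y : ℝ) : ℂ) * ((√x / √y : ℝ) : ℂ) = ((x / y : ℝ) : ℂ) := by
  rw [Complex.star_def, Complex.conj_ofReal, ← Complex.ofReal_mul, div_mul_div_comm,
    Real.mul_self_sqrt hx, Real.mul_self_sqrt hy]

theorem lcu_of_block_encodings_general (m a d : ℕ) (ha : 0 < a)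
    (W : Fin m → Matrix (Fin a × Fin d) (Fin a × Fin d) ℂ)
    (A : Fin m → Matrix (Fin d) (Fin d) ℂ)
    (α : Fin m → ℝ) (hα : ∀ i, 0 < α i)
    (hcomp : ∀ i, (embedVec (d := Fin d) (Pi.single (⟨0, ha⟩ : Fin a) 1))ᴴ * W i *
        embedVec (d := Fin d) (Pi.single (⟨0, ha⟩ : Fin a) 1) = ((α i : ℂ))⁻¹ • A i)
    (αtot : ℝ) (hαtot : αtot = ∑ i, α i) :
    (embedVec (d := Fin d) (Pi.single (⟨0, ha⟩ : Fin a) 1))ᴴ *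
        ((embedVec (d := Fin a × Fin d) (fun i : Fin m => ((Real.sqrt (α i) / Real.sqrt αtot : ℝ) : ℂ)))ᴴ *
          (∑ i : Fin m, Matrix.single i i (1 : ℂ) ⊗ₖ W i) *
          embedVec (d := Fin a × Fin d) (fun i : Fin m => ((Real.sqrt (α i) / Real.sqrt αtot : ℝ) : ℂ))) *
        embedVec (d := Fin d) (Pi.single (⟨0, ha⟩ : Fin a) 1) =
      ((αtot : ℂ))⁻¹ • ∑ i : Fin m, A i := by
  have hαtot_nonneg : 0 ≤ αtot := hαtot ▸ Finset.sum_nonneg fun i _ => (hα i).le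
  rw [conjTranspose_embedVec_mul_sum_single_kronecker_mul_embedVec, Matrix.mul_sum,
    Matrix.sum_mul, Finset.smul_sum]
  refine Finset.sum_congr rfl fun i _ => ?_
  rw [Matrix.mul_smul, Matrix.smul_mul, hcomp, smul_smul,
    star_ofReal_sqrt_div_sqrt_mul_self (hα i).le hαtot_nonneg]
  have hαi : (α i : ℂ) ≠ 0 := by exact_mod_cast (hα i).ne'
  push_cast
  field_simp

/-- A weighted linear combination of block encodings is a block encoding of the sum:
if `(e₀† ⊗ I_d) W_i (e₀ ⊗ I_d) = A_i/α_i` then with `g = (1/√α) Σ_i √α_i e_i`,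
`(g† ⊗ e₀† ⊗ I_d)(Σ_i E_{i,i} ⊗ W_i)(g ⊗ e₀ ⊗ I_d) = (Σ_i A_i)/α` where `α = Σ_i α_i`. -/
theorem lcu_of_block_encodings (m a d : ℕ) (hm : 1 ≤ m) (ha : 0 < a)
    (W : Fin m → Matrix (Fin a × Fin d) (Fin a × Fin d) ℂ)
    (hW : ∀ i, W i ∈ Matrix.unitaryGroup (Fin a × Fin d) ℂ)
    (A : Fin m → Matrix (Fin d) (Fin d) ℂ)
    (α : Fin m → ℝ) (hα : ∀ i, 0 < α i)
    (hcomp : ∀ i, (embedVec (d := Fin d) (Pi.single (⟨0, ha⟩ : Fin a) 1))ᴴ * W i *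
        embedVec (d := Fin d) (Pi.single (⟨0, ha⟩ : Fin a) 1) = ((α i : ℂ))⁻¹ • A i)
    (αtot : ℝ) (hαtot : αtot = ∑ i, α i) :
    (embedVec (d := Fin d) (Pi.single (⟨0, ha⟩ : Fin a) 1))ᴴ *
        ((embedVec (d := Fin a × Fin d) (fun i : Fin m => ((Real.sqrt (α i) / Real.sqrt αtot : ℝ) : ℂ)))ᴴ *
          (∑ i : Fin m, Matrix.single i i (1 : ℂ) ⊗ₖ W i) *
          embedVec (d := Fin a × Fin d) (fun i : Fin m => ((Real.sqrt (α i) / Real.sqrt αtot : ℝ) : ℂ))) *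
        embedVec (d := Fin d) (Pi.single (⟨0, ha⟩ : Fin a) 1) =
      ((αtot : ℂ))⁻¹ • ∑ i : Fin m, A i :=
  lcu_of_block_encodings_general m a d ha W A α hα hcomp αtot hαtot
end

section
/- Let a_1, a_2, d ∈ ℕ, let W_1 be an operator on ℂ^{a_1} ⊗ ℂ^d with compression A_1 and W_2 an operator on ℂ^{a_2} ⊗ ℂ^d with compression A_2. Let W̃_1 be the operator on ℂ^{a_1} ⊗ ℂ^{a_2} ⊗ ℂ^d that acts as W_1 on the first and third tensor factors and as the identity on the second, and W̃_2 the operator acting as W_2 on the second and third factors and as the identity on the first. Then ((e_0 ⊗ e_0)† ⊗ I_d)(W̃_1 W̃_2)((e_0 ⊗ e_0) ⊗ I_d) = A_1 A_2; that is, composing block encodings on disjoint ancilla registers yields a block encoding of the product. -/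
/-!
Embedding along a basis vector `e_i` selects columns of the identity, so the compression of
`W` along `e_i ⊗ I` is its diagonal block `W_{(i,·),(i,·)}`. Since `W̃₁` is diagonal in the
second register and `W̃₂` in the first, the `(i₁, i₂)` diagonal block of `W̃₁ W̃₂` is the
product of the `i₁` block of `W₁` with the `i₂` block of `W₂`.
-/

open Matrix

open scoped Kronecker

section Compression

-- `embedVec` is always given `(d := d)`: with `d` left to unification, `*` elaborates to
-- `CStarMatrix` multiplication and the lemmas no longer match.
variable {m d : Type*} [DecidableEq m] [DecidableEq d]

theorem embedVec_single_one (i : m) :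
    embedVec (d := d) (Pi.single i 1) =
      (1 : Matrix (m × d) (m × d) ℂ).submatrix id (Prod.mk i) := by
  ext ⟨j, x⟩ y
  by_cases h : j = i
  · subst h
    simp [embedVec, one_apply]
  · simp [embedVec, one_apply, h, Pi.single_apply]

variable [Fintype m] [Fintype d]

theorem mul_embedVec_single_one {k : Type*} (i : m) (W : Matrix k (m × d) ℂ) :
    W * embedVec (d := d) (Pi.single i 1) = W.submatrix id (Prod.mk i) := by
  rw [embedVec_single_one]
  exact mul_submatrix_one (Equiv.refl (m × d)) (Prod.mk i) W

theorem conjTranspose_embedVec_single_one_mul {k : Type*} (i : m) (W : Matrix (m × d) k ℂ) :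
    (embedVec (d := d) (Pi.single i 1))ᴴ * W = W.submatrix (Prod.mk i) id := by
  rw [embedVec_single_one, conjTranspose_submatrix, conjTranspose_one]
  exact one_submatrix_mul (Prod.mk i) (Equiv.refl (m × d)) W

theorem embedVec_single_one_compression (i : m) (W : Matrix (m × d) (m × d) ℂ) :
    (embedVec (d := d) (Pi.single i 1))ᴴ * W * embedVec (d := d) (Pi.single i 1) =
      W.submatrix (Prod.mk i) (Prod.mk i) := by
  rw [mul_embedVec_single_one, conjTranspose_embedVec_single_one_mul, submatrix_submatrix]
  rfl

end Compression

def kroneckerIdMiddle {l m n R : Type*} [DecidableEq m] [MulZeroOneClass R]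
    (X : Matrix (l × n) (l × n) R) : Matrix (l × (m × n)) (l × (m × n)) R :=
  of fun p q => X (p.1, p.2.2) (q.1, q.2.2) * (1 : Matrix m m R) p.2.1 q.2.1

theorem kroneckerIdMiddle_mul_one_kronecker_apply {l m n R : Type*} [Fintype l] [Fintype m]
    [Fintype n] [DecidableEq l] [DecidableEq m] [NonAssocSemiring R] (X : Matrix (l × n) (l × n) R)
    (Y : Matrix (m × n) (m × n) R) (i i' : l) (j j' : m) (s t : n) :
    (kroneckerIdMiddle X * ((1 : Matrix l l R) ⊗ₖ Y) : Matrix (l × (m × n)) (l × (m × n)) R)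
        (i, j, s) (i', j', t) =
      ∑ y, X (i, s) (i', y) * Y (j, y) (j', t) := by
  simp [kroneckerIdMiddle, mul_apply, Fintype.sum_prod_type, one_apply, ite_mul, mul_ite]

/-- Composing block encodings on disjoint ancilla registers yields a block encoding of
the product: if `W₁` on `ℂ^{a₁} ⊗ ℂ^d` has compression `A₁` and `W₂` on `ℂ^{a₂} ⊗ ℂ^d`
has compression `A₂`, then lifting `W₁` to act on the first and third factors of
`ℂ^{a₁} ⊗ ℂ^{a₂} ⊗ ℂ^d` and `W₂` on the second and third, the compression of
`W̃₁ W̃₂` along `e₀ ⊗ e₀` is `A₁ A₂`. -/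
theorem block_encoding_product (a₁ a₂ d : ℕ) (ha₁ : 0 < a₁) (ha₂ : 0 < a₂)
    (W₁ : Matrix (Fin a₁ × Fin d) (Fin a₁ × Fin d) ℂ)
    (W₂ : Matrix (Fin a₂ × Fin d) (Fin a₂ × Fin d) ℂ)
    (A₁ A₂ : Matrix (Fin d) (Fin d) ℂ)
    (hW₁ : (embedVec (d := Fin d) (Pi.single (⟨0, ha₁⟩ : Fin a₁) 1))ᴴ * W₁ *
        embedVec (d := Fin d) (Pi.single (⟨0, ha₁⟩ : Fin a₁) 1) = A₁)
    (hW₂ : (embedVec (d := Fin d) (Pi.single (⟨0, ha₂⟩ : Fin a₂) 1))ᴴ * W₂ *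
        embedVec (d := Fin d) (Pi.single (⟨0, ha₂⟩ : Fin a₂) 1) = A₂)
    (W₁lift W₂lift :
      Matrix (Fin a₁ × (Fin a₂ × Fin d)) (Fin a₁ × (Fin a₂ × Fin d)) ℂ)
    (hW₁lift : W₁lift = Matrix.of fun p q =>
      W₁ (p.1, p.2.2) (q.1, q.2.2) * (if p.2.1 = q.2.1 then 1 else 0))
    (hW₂lift : W₂lift = Matrix.of fun p q =>
      (if p.1 = q.1 then 1 else 0) * W₂ p.2 q.2) :
    (embedVec (d := Fin d) (Pi.single (⟨0, ha₂⟩ : Fin a₂) 1))ᴴ *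
        ((embedVec (d := Fin a₂ × Fin d) (Pi.single (⟨0, ha₁⟩ : Fin a₁) 1))ᴴ * (W₁lift * W₂lift) *
          embedVec (d := Fin a₂ × Fin d) (Pi.single (⟨0, ha₁⟩ : Fin a₁) 1)) *
        embedVec (d := Fin d) (Pi.single (⟨0, ha₂⟩ : Fin a₂) 1) =
      A₁ * A₂ := by
  have hW₁lift' : W₁lift = kroneckerIdMiddle W₁ := hW₁lift
  have hW₂lift' : W₂lift = 1 ⊗ₖ W₂ := hW₂lift
  rw [hW₁lift', hW₂lift', ← hW₁, ← hW₂]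
  simp only [embedVec_single_one_compression, submatrix_submatrix]
  ext s t
  exact kroneckerIdMiddle_mul_one_kronecker_apply W₁ W₂ _ _ _ _ s t
end

section
/- Let W be a unitary on ℂ^a ⊗ ℂ^d with compression M, let K ≥ 1, and let c_0, …, c_K ≥ 0 with C = Σ_{k=0}^{K} c_k > 0. On the space (ℂ²)^{⊗K} ⊗ (ℂ^a)^{⊗K} ⊗ ℂ^d, let b = (1/√C) Σ_{k=0}^{K} √c_k |1^k 0^{K−k}⟩ ∈ (ℂ²)^{⊗K}, where |1^k 0^{K−k}⟩ is the computational basis vector whose first k bits are 1 and remaining bits are 0, and for each i ∈ {1,…,K} let S_i = |0⟩⟨0|_i ⊗ I + |1⟩⟨1|_i ⊗ (−i·W_{(i)}), where |0⟩⟨0|_i, |1⟩⟨1|_i act on the i-th qubit factor and W_{(i)} acts as W on the i-th copy of ℂ^a together with ℂ^d (identity elsewhere). Then (b† ⊗ (e_0^{⊗K})† ⊗ I_d)(S_1 S_2 ⋯ S_K)(b ⊗ e_0^{⊗K} ⊗ I_d) = (1/C) Σ_{k=0}^{K} c_k (−i)^k M^k. In particular, taking M = H/α for a matrix H with block encoding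 W and c_k = (αt)^k/k!, the compression equals (1/C) Σ_{k=0}^{K} ((−it)^k/k!) H^k, the truncated Taylor series of exp(−iHt). -/
open Matrix

/-- The controlled step `S_i = |0⟩⟨0|_i ⊗ I + |1⟩⟨1|_i ⊗ (−i·W_{(i)})` on
`(ℂ²)^{⊗K} ⊗ (ℂ^a)^{⊗K} ⊗ ℂ^d`, where `W_{(i)}` acts as `W` on the `i`-th copy of
`ℂ^a` together with `ℂ^d` and as the identity elsewhere. -/
noncomputable def taylorStep (K a d : ℕ)
    (W : Matrix (Fin a × Fin d) (Fin a × Fin d) ℂ) (i : Fin K) :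
    Matrix ((Fin K → Bool) × ((Fin K → Fin a) × Fin d))
      ((Fin K → Bool) × ((Fin K → Fin a) × Fin d)) ℂ :=
  Matrix.of fun p q =>
    (if p.1 = q.1 then (1 : ℂ) else 0) *
      (if p.1 i then
          (-Complex.I) * W (p.2.1 i, p.2.2) (q.2.1 i, q.2.2) *
            (if p.2.1 = Function.update q.2.1 i (p.2.1 i) then 1 else 0)
        else if p.2 = q.2 then 1 else 0)

/-- The unary-encoded control state `b = (1/√C) Σ_{k=0}^{K} √c_k |1^k 0^{K−k}⟩`. -/
noncomputable def unaryState (K : ℕ) (c : ℕ → ℝ) (C : ℝ) : (Fin K → Bool) → ℂ :=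
  ∑ k ∈ Finset.range (K + 1),
    ((Real.sqrt (c k) / Real.sqrt C : ℝ) : ℂ) •
      (Pi.single (fun i : Fin K => decide ((i : ℕ) < k)) 1 : (Fin K → Bool) → ℂ)

/-! Each step `S_i` is block diagonal in the control register, and at control string `s` it
applies `-i W` to the `i`-th ancilla copy exactly when `s i` is set. Since distinct steps act on
distinct ancilla copies, the `e₀^{⊗K}`-compression of `S_1 ⋯ S_K` at control `s` is the ordered
product of the `e₀`-compressions of the single steps, which is `(-i M)^k` for `s = 1^k 0^{K-k}`.
The strings `1^k 0^{K-k}` are distinct, so compressing by `b` weights that term by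
`|b_k|² = c_k / C`. -/
theorem conjTranspose_embedVec_mul_mul_embedVec_apply_s13 {m n : Type*} [Fintype m] [Fintype n]
    [DecidableEq n] (v : m → ℂ) (X : Matrix (m × n) (m × n) ℂ) (x y : n) :
    ((embedVec (d := n) v)ᴴ * X * embedVec (d := n) v) x y =
      ∑ s, ∑ s', star (v s) * X (s, x) (s', y) * v s' := by
  simp only [mul_apply, conjTranspose_apply, embedVec, of_apply, Fintype.sum_prod_type,
    star_mul', Finset.sum_mul]
  simp [apply_ite star]
  exact Finset.sum_comm

theorem conjTranspose_embedVec_single_mul_mul_embedVec_single {m n : Type*} [Fintype m]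
    [DecidableEq m] [Fintype n] [DecidableEq n] (i : m) (X : Matrix (m × n) (m × n) ℂ) :
    (embedVec (d := n) (Pi.single i 1))ᴴ * X * embedVec (d := n) (Pi.single i 1) =
      X.submatrix (Prod.mk i) (Prod.mk i) := by
  ext x y
  simp [conjTranspose_embedVec_mul_mul_embedVec_apply_s13, Pi.single_apply]

theorem List.prod_ofFn_ite_lt {M : Type*} [Monoid M] (A : M) {n k : ℕ} (hk : k ≤ n) :
    (List.ofFn fun i : Fin n => if (i : ℕ) < k then A else 1).prod = A ^ k := by
  have : (List.ofFn fun i : Fin n => if (i : ℕ) < k then A else 1) =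
      List.replicate k A ++ List.replicate (n - k) 1 := by
    refine List.ext_getElem (by simp; omega) fun j h₁ h₂ => ?_
    simp [List.getElem_append, List.getElem_replicate]
  simp [this]

theorem unary_injOn (K : ℕ) :
    Set.InjOn (fun k : ℕ => fun i : Fin K => decide ((i : ℕ) < k)) (Finset.range (K + 1)) := by
  intro k hk l hl h
  by_contra hne
  wlog hlt : k < l generalizing k l
  · exact this hl hk h.symm (Ne.symm hne) (by omega)
  have := congrFun h ⟨k, by simp at hl; omega⟩
  simp [hlt] at this

theorem Fintype.sum_ite_eq_update {ι β R : Type*} [DecidableEq ι] [Fintype ι] [Fintype β]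
    [DecidableEq β] [AddCommMonoid R] (i : ι) (u : ι → β) (F : (ι → β) → R) :
    (∑ w, if u = Function.update w i (u i) then F w else 0) =
      ∑ m, F (Function.update u i m) := by
  have hmem : ∀ w, u = Function.update w i (u i) ↔
      w ∈ Finset.univ.image (Function.update u i) := fun w => by
    simp [Function.eq_update_iff, eq_comm]
  simp only [hmem, Finset.sum_ite_mem, Finset.univ_inter]
  exact Finset.sum_image fun _ _ _ _ h => Function.update_injective u i h

theorem sum_star_mul_mul_sum_smul_single {α ι R : Type*} [Fintype α] [DecidableEq α]
    [Semiring R] [StarRing R] {S : Finset ι} {σ : ι → α} (hσ : Set.InjOn σ S) (w : ι → R)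
    (f : α → R) :
    ∑ s, star ((∑ k ∈ S, w k • Pi.single (σ k) 1 : α → R) s) * f s *
        (∑ k ∈ S, w k • Pi.single (σ k) 1 : α → R) s =
      ∑ k ∈ S, star (w k) * f (σ k) * w k := by
  set b : α → R := ∑ k ∈ S, w k • Pi.single (σ k) 1 with hbdef
  have hb : ∀ k ∈ S, b (σ k) = w k := fun k hk => by
    rw [hbdef, Finset.sum_apply, Finset.sum_eq_single_of_mem k hk]
    · simp
    · intro l hl hlk
      simp [hσ.ne hk hl (Ne.symm hlk)]
  have hb0 : ∀ s ∉ S.image σ, b s = 0 := fun s hs => by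
    rw [hbdef, Finset.sum_apply]
    refine Finset.sum_eq_zero fun k hk => ?_
    simp [show s ≠ σ k from fun h => hs (h ▸ Finset.mem_image_of_mem σ hk)]
  rw [← Finset.sum_subset (Finset.subset_univ (S.image σ)) fun s _ hs => by simp [hb0 s hs],
    Finset.sum_image hσ]
  exact Finset.sum_congr rfl fun k hk => by rw [hb k hk]

noncomputable def stepBlock {K a d : ℕ} (W : Matrix (Fin a × Fin d) (Fin a × Fin d) ℂ)
    (s : Fin K → Bool) (u v : Fin K → Fin a) (i : Fin K) : Matrix (Fin d) (Fin d) ℂ :=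
  if s i then -Complex.I • W.submatrix (Prod.mk (u i)) (Prod.mk (v i))
  else if u i = v i then 1 else 0

theorem taylorStep_mul_apply {K a d : ℕ} (W : Matrix (Fin a × Fin d) (Fin a × Fin d) ℂ)
    (i : Fin K) (P : Matrix ((Fin K → Bool) × ((Fin K → Fin a) × Fin d))
      ((Fin K → Bool) × ((Fin K → Fin a) × Fin d)) ℂ) (s u x q) :
    (taylorStep K a d W i * P) (s, u, x) q =
      if s i then -Complex.I * ∑ m, ∑ z, W (u i, x) (m, z) * P (s, Function.update u i m, z) q
      else P (s, u, x) q := by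
  rw [mul_apply, Fintype.sum_prod_type]
  simp only [taylorStep, of_apply, ite_mul, one_mul, zero_mul, Finset.sum_ite_irrel,
    Finset.sum_const_zero, Finset.sum_ite_eq, Finset.mem_univ, if_true]
  split_ifs with hsi
  · have hcollapse := Fintype.sum_ite_eq_update i u fun w =>
      -Complex.I * ∑ z, W (u i, x) (w i, z) * P (s, w, z) q
    simp only [Function.update_self] at hcollapse
    rw [Fintype.sum_prod_type, Finset.mul_sum, ← hcollapse]
    refine Finset.sum_congr rfl fun w _ => ?_
    split_ifs <;> simp [Finset.mul_sum, mul_assoc]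
  · simp

theorem prod_map_taylorStep_apply {K a d : ℕ} (W : Matrix (Fin a × Fin d) (Fin a × Fin d) ℂ)
    {L : List (Fin K)} (hL : L.Nodup) (s s' : Fin K → Bool) (u v : Fin K → Fin a) (x y : Fin d) :
    (L.map (taylorStep K a d W)).prod (s, u, x) (s', v, y) =
      if s = s' ∧ ∀ j ∉ L, u j = v j then (L.map (stepBlock W s u v)).prod x y else 0 := by
  induction L generalizing u x with
  | nil => simp [one_apply, funext_iff, Prod.ext_iff, ite_and]
  | cons i L ih =>
    obtain ⟨hiL, hL⟩ := List.nodup_cons.mp hL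
    have hblocks : ∀ m, L.map (stepBlock W s (Function.update u i m) v) =
        L.map (stepBlock W s u v) := fun m => List.map_congr_left fun j hj => by
      simp [stepBlock, Function.update_of_ne (ne_of_mem_of_not_mem hj hiL)]
    rw [List.map_cons, List.prod_cons, taylorStep_mul_apply]
    by_cases hsi : s i
    · have hcond : ∀ m, (s = s' ∧ ∀ j ∉ L, Function.update u i m j = v j) ↔
          m = v i ∧ s = s' ∧ ∀ j ∉ i :: L, u j = v j := fun m => by
        simp only [List.mem_cons, not_or, Function.update_apply]
        grind
      simp only [hsi, if_true, ih hL, hblocks, hcond]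
      by_cases h : s = s' ∧ ∀ j ∉ i :: L, u j = v j
      · simp only [eq_true h, and_true, if_true]
        simp [stepBlock, hsi, mul_apply, Finset.mul_sum, mul_assoc]
      · simp only [eq_false h, and_false, if_false, Finset.sum_const_zero, mul_zero]
    · have hstep : stepBlock W s u v i = if u i = v i then 1 else 0 := by simp [stepBlock, hsi]
      simp only [hsi, Bool.false_eq_true, if_false, ih hL, List.map_cons, List.prod_cons, hstep]
      by_cases hui : u i = v i
      · simp only [hui, if_true, one_mul]
        grind
      · have : ¬ ∀ j ∉ L, u j = v j := fun h => hui (h i hiL)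
        simp [hui, this]

theorem prod_ofFn_taylorStep_apply {K a d : ℕ} (W : Matrix (Fin a × Fin d) (Fin a × Fin d) ℂ)
    (s s' : Fin K → Bool) (u v : Fin K → Fin a) (x y : Fin d) :
    (List.ofFn (taylorStep K a d W)).prod (s, u, x) (s', v, y) =
      if s = s' then ((List.finRange K).map (stepBlock W s u v)).prod x y else 0 := by
  simp [List.ofFn_eq_map, prod_map_taylorStep_apply W (List.nodup_finRange K)]

theorem prod_stepBlock_unary_const {K a d : ℕ} (W : Matrix (Fin a × Fin d) (Fin a × Fin d) ℂ)
    (o : Fin a) {k : ℕ} (hk : k ≤ K) :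
    ((List.finRange K).map
        (stepBlock W (fun i : Fin K => decide ((i : ℕ) < k)) (fun _ => o) (fun _ => o))).prod =
      (-Complex.I • W.submatrix (Prod.mk o) (Prod.mk o)) ^ k := by
  rw [← List.prod_ofFn_ite_lt _ hk, List.ofFn_eq_map]
  congr 1
  refine List.map_congr_left fun i _ => ?_
  by_cases hik : (i : ℕ) < k <;> simp [stepBlock, hik]

theorem truncated_taylor_block_encoding_general (K a d : ℕ) (ha : 0 < a)
    (W : Matrix (Fin a × Fin d) (Fin a × Fin d) ℂ)
    (M : Matrix (Fin d) (Fin d) ℂ)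
    (hM : (embedVec (d := Fin d) (Pi.single (⟨0, ha⟩ : Fin a) 1))ᴴ * W *
        embedVec (d := Fin d) (Pi.single (⟨0, ha⟩ : Fin a) 1) = M)
    (c : ℕ → ℝ) (hc : ∀ k ≤ K, 0 ≤ c k)
    (C : ℝ) (hCpos : 0 < C) :
    (embedVec (d := Fin d) (Pi.single (fun _ : Fin K => (⟨0, ha⟩ : Fin a)) 1))ᴴ *
        ((embedVec (d := (Fin K → Fin a) × Fin d) (unaryState K c C))ᴴ *
          (List.ofFn fun i : Fin K => taylorStep K a d W i).prod *
          embedVec (d := (Fin K → Fin a) × Fin d) (unaryState K c C)) *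
        embedVec (d := Fin d) (Pi.single (fun _ : Fin K => (⟨0, ha⟩ : Fin a)) 1) =
      ((C : ℂ))⁻¹ •
        ∑ k ∈ Finset.range (K + 1), ((c k : ℂ) * (-Complex.I) ^ k) • M ^ k := by
  rw [conjTranspose_embedVec_single_mul_mul_embedVec_single] at hM ⊢
  ext x y
  rw [submatrix_apply, conjTranspose_embedVec_mul_mul_embedVec_apply_s13]
  simp only [prod_ofFn_taylorStep_apply, mul_ite, ite_mul, zero_mul, mul_zero, Finset.sum_ite_eq,
    Finset.mem_univ, if_true]
  rw [unaryState, sum_star_mul_mul_sum_smul_single (unary_injOn K), Matrix.smul_apply,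
    Matrix.sum_apply, Finset.smul_sum]
  refine Finset.sum_congr rfl fun k hk => ?_
  have hkK : k ≤ K := Nat.lt_succ_iff.mp (Finset.mem_range.mp hk)
  have hweight : ((√(c k) / √C : ℝ) : ℂ) * ((√(c k) / √C : ℝ) : ℂ) = c k * (C : ℂ)⁻¹ := by
    rw [← Complex.ofReal_mul, div_mul_div_comm, Real.mul_self_sqrt (hc k hkK),
      Real.mul_self_sqrt hCpos.le]
    push_cast; ring
  rw [prod_stepBlock_unary_const W _ hkK, hM, smul_pow]
  simp only [Matrix.smul_apply, smul_eq_mul, Complex.star_def, Complex.conj_ofReal]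
  linear_combination ((-Complex.I) ^ k * (M ^ k) x y) * hweight

/-- Truncated-Taylor-series block encoding by unary encoding: if the unitary `W` is a
block encoding of `M`, then compressing `S_1 S_2 ⋯ S_K` by the prepared state
`b ⊗ e₀^{⊗K}` yields `(1/C) Σ_{k=0}^{K} c_k (−i)^k M^k`. -/
theorem truncated_taylor_block_encoding (K a d : ℕ) (hK : 1 ≤ K) (ha : 0 < a)
    (W : Matrix (Fin a × Fin d) (Fin a × Fin d) ℂ)
    (hW : W ∈ Matrix.unitaryGroup (Fin a × Fin d) ℂ)
    (M : Matrix (Fin d) (Fin d) ℂ)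
    (hM : (embedVec (d := Fin d) (Pi.single (⟨0, ha⟩ : Fin a) 1))ᴴ * W *
        embedVec (d := Fin d) (Pi.single (⟨0, ha⟩ : Fin a) 1) = M)
    (c : ℕ → ℝ) (hc : ∀ k ≤ K, 0 ≤ c k)
    (C : ℝ) (hC : C = ∑ k ∈ Finset.range (K + 1), c k) (hCpos : 0 < C) :
    (embedVec (d := Fin d) (Pi.single (fun _ : Fin K => (⟨0, ha⟩ : Fin a)) 1))ᴴ *
        ((embedVec (d := (Fin K → Fin a) × Fin d) (unaryState K c C))ᴴ *
          (List.ofFn fun i : Fin K => taylorStep K a d W i).prod *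
          embedVec (d := (Fin K → Fin a) × Fin d) (unaryState K c C)) *
        embedVec (d := Fin d) (Pi.single (fun _ : Fin K => (⟨0, ha⟩ : Fin a)) 1) =
      ((C : ℂ))⁻¹ •
        ∑ k ∈ Finset.range (K + 1), ((c k : ℂ) * (-Complex.I) ^ k) • M ^ k :=
  truncated_taylor_block_encoding_general K a d ha W M hM c hc C hCpos
end

section
/- Let A and B be Hermitian d×d complex matrices, t ≥ 0 a real number, and r ≥ 1 an integer. Then ‖exp(−it(A+B)) − (exp(−i(t/r)A) · exp(−i(t/r)B))^r‖ ≤ t² ‖AB − BA‖ / (2r), where ‖·‖ is the operator norm. -/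
/-!
Write `U_x(s) = exp(-i s x)`; for self-adjoint `x` these are unitary. Hence, by telescoping,
`‖U^r - V^r‖ ≤ r ‖U - V‖` for unitaries, and it suffices to bound one step by
`s² ‖[a, b]‖ / 2` with `s = t / r`. For that step, `F(u) = U_{a+b}(-u) U_a(u) U_b(u)` has derivative
`U_{a+b}(-u) (-i [U_a(u), b]) U_b(u)`, and `‖[U_a(u), b]‖ ≤ u ‖[a, b]‖` because the conjugate
`U_a(u) b U_a(-u)` moves with speed `‖[a, b]‖`. The argument runs in any C⋆-algebra, and complex
matrices with the spectral norm form one.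
-/

open Matrix

open Complex Set

theorem norm_sub_le_of_norm_hasDerivAt_le_mul {E : Type*} [NormedAddCommGroup E] [NormedSpace ℝ E]
    {f f' : ℝ → E} {C t : ℝ} (hf : ∀ u, HasDerivAt f (f' u) u)
    (bound : ∀ u ∈ Ico 0 t, ‖f' u‖ ≤ C * u) (ht : 0 ≤ t) :
    ‖f t - f 0‖ ≤ C * t ^ 2 / 2 := by
  have hB : ∀ u : ℝ, HasDerivAt (fun u => C * u ^ 2 / 2) (C * u) u := fun u =>
    (((hasDerivAt_pow 2 u).const_mul C).div_const 2).congr_deriv (by ring)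
  exact image_norm_le_of_norm_deriv_right_le_deriv_boundary (f := fun u => f u - f 0)
    (fun u _ => ((hf u).sub_const _).continuousAt.continuousWithinAt)
    (fun u _ => ((hf u).sub_const _).hasDerivWithinAt) (by simp) hB bound ⟨ht, le_rfl⟩

theorem norm_pow_sub_pow_le_of_mem_unitary {E : Type*} [NormedRing E] [StarRing E] [CStarRing E]
    {u v : E} (hu : u ∈ unitary E) (hv : v ∈ unitary E) (n : ℕ) :
    ‖u ^ n - v ^ n‖ ≤ n * ‖u - v‖ := by
  induction n with
  | zero => simp
  | succ k ih =>
    calc ‖u ^ (k + 1) - v ^ (k + 1)‖ = ‖u * (u ^ k - v ^ k) + (u - v) * v ^ k‖ := by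
          rw [pow_succ' u, pow_succ' v]; noncomm_ring
      _ ≤ ‖u ^ k - v ^ k‖ + ‖u - v‖ := by
          grw [norm_add_le, CStarRing.norm_mem_unitary_mul _ hu,
            CStarRing.norm_mul_mem_unitary _ (pow_mem hv k)]
      _ ≤ (k + 1 : ℕ) * ‖u - v‖ := by push_cast; linarith

section CStarAlgebra

variable {𝒜 : Type*} [CStarAlgebra 𝒜]

-- The algebraic lemmas about `NormedSpace.exp` are stated for `ℚ`-algebras.
noncomputable local instance : NormedAlgebra ℚ 𝒜 := .restrictScalars ℚ ℂ 𝒜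

noncomputable def propagator (a : 𝒜) (s : ℝ) : 𝒜 := NormedSpace.exp ((-I * s) • a)

namespace propagator

theorem add (a : 𝒜) (s u : ℝ) : propagator a (s + u) = propagator a s * propagator a u := by
  rw [propagator, propagator, propagator, ← NormedSpace.exp_add_of_commute
    (((Commute.refl a).smul_left _).smul_right _), ← add_smul]
  push_cast; ring_nf

@[simp] theorem zero (a : 𝒜) : propagator a 0 = 1 := by simp [propagator]

theorem neg_mul_self (a : 𝒜) (s : ℝ) : propagator a (-s) * propagator a s = 1 := by
  rw [← add, neg_add_cancel, zero]

theorem mul_neg_self (a : 𝒜) (s : ℝ) : propagator a s * propagator a (-s) = 1 := by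
  rw [← add, add_neg_cancel, zero]

theorem natCast_mul (a : 𝒜) (n : ℕ) (s : ℝ) : propagator a (n * s) = propagator a s ^ n := by
  rw [propagator, propagator, ← NormedSpace.exp_nsmul, ← Nat.cast_smul_eq_nsmul ℂ, smul_smul]
  push_cast; ring_nf

theorem mem_unitary {a : 𝒜} (ha : IsSelfAdjoint a) (s : ℝ) : propagator a s ∈ unitary 𝒜 := by
  refine NormedSpace.exp_mem_unitary_of_mem_skewAdjoint (ha.smul_mem_skewAdjoint ?_)
  simp [skewAdjoint.mem_iff]

theorem commute_smul (a : 𝒜) (s : ℝ) (z : ℂ) : Commute (propagator a s) (z • a) :=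
  (((Commute.refl a).smul_left _).smul_right _).exp_left

theorem eq_exp_real_smul (a : 𝒜) : propagator a = fun s : ℝ => NormedSpace.exp (s • (-I • a)) := by
  ext s
  rw [propagator, ← Complex.coe_smul, smul_smul, mul_comm]

theorem hasDerivAt (a : 𝒜) (s : ℝ) :
    HasDerivAt (propagator a) (propagator a s * (-I • a)) s := by
  rw [eq_exp_real_smul]
  exact hasDerivAt_exp_smul_const _ _

theorem hasDerivAt_neg (a : 𝒜) (s : ℝ) :
    HasDerivAt (fun u => propagator a (-u)) (-(propagator a (-s) * (-I • a))) s :=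
  ((hasDerivAt a (-s)).scomp s (_root_.hasDerivAt_neg s)).congr_deriv (by simp)

theorem norm_mul_sub_mul_le {a : 𝒜} (ha : IsSelfAdjoint a) (b : 𝒜) {s : ℝ} (hs : 0 ≤ s) :
    ‖propagator a s * b - b * propagator a s‖ ≤ s * ‖a * b - b * a‖ := by
  set K : ℝ → 𝒜 := fun u => propagator a u * b * propagator a (-u)
  have hK : ∀ u, HasDerivAt K (propagator a u * (-I • (a * b - b * a)) * propagator a (-u)) u := by
    intro u
    refine (((hasDerivAt a u).mul_const b).mul (hasDerivAt_neg a u)).congr_deriv ?_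
    rw [(commute_smul a (-u) (-I)).eq, smul_sub, smul_mul_assoc, mul_smul_comm]
    noncomm_ring
  have hK_norm : ∀ u, ‖propagator a u * (-I • (a * b - b * a)) * propagator a (-u)‖ =
      ‖a * b - b * a‖ := by
    intro u
    rw [CStarRing.norm_mul_mem_unitary _ (mem_unitary ha _),
      CStarRing.norm_mem_unitary_mul _ (mem_unitary ha _), norm_smul]
    simp
  have hK_sub : ‖K s - K 0‖ ≤ ‖a * b - b * a‖ * (s - 0) :=
    norm_image_sub_le_of_norm_deriv_le_segment' (fun u _ => (hK u).hasDerivWithinAt)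
      (fun u _ => (hK_norm u).le) s ⟨hs, le_rfl⟩
  have hK_mul : K s * propagator a s = propagator a s * b := by
    simp only [K, mul_assoc, neg_mul_self, mul_one]
  calc ‖propagator a s * b - b * propagator a s‖ = ‖(K s - K 0) * propagator a s‖ := by
        simp [K, sub_mul, hK_mul]
    _ ≤ s * ‖a * b - b * a‖ := by
        rw [CStarRing.norm_mul_mem_unitary _ (mem_unitary ha _)]
        linarith

theorem norm_add_sub_mul_le {a b : 𝒜} (ha : IsSelfAdjoint a) (hb : IsSelfAdjoint b) {s : ℝ}
    (hs : 0 ≤ s) :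
    ‖propagator (a + b) s - propagator a s * propagator b s‖ ≤ ‖a * b - b * a‖ * s ^ 2 / 2 := by
  set F : ℝ → 𝒜 := fun u => propagator (a + b) (-u) * (propagator a u * propagator b u)
  set F' : ℝ → 𝒜 := fun u =>
    propagator (a + b) (-u) * ((-I • (propagator a u * b - b * propagator a u)) * propagator b u)
  have hF : ∀ u, HasDerivAt F (F' u) u := by
    intro u
    refine ((hasDerivAt_neg (a + b) u).mul ((hasDerivAt a u).mul (hasDerivAt b u))).congr_deriv ?_
    simp only [F', Pi.mul_apply]
    rw [(commute_smul a u (-I)).eq, (commute_smul b u (-I)).eq, smul_add, smul_sub,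
      ← mul_smul_comm, ← smul_mul_assoc]
    noncomm_ring
  have hF'_norm : ∀ u ∈ Ico 0 s, ‖F' u‖ ≤ ‖a * b - b * a‖ * u := by
    intro u hu
    rw [CStarRing.norm_mem_unitary_mul _ (mem_unitary (ha.add hb) _),
      CStarRing.norm_mul_mem_unitary _ (mem_unitary hb _), norm_smul, norm_neg, norm_I, one_mul,
      mul_comm]
    exact norm_mul_sub_mul_le ha b hu.1
  have hF_mul : propagator (a + b) s * F s = propagator a s * propagator b s := by
    simp only [F, ← mul_assoc, mul_neg_self, one_mul]
  calc ‖propagator (a + b) s - propagator a s * propagator b s‖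
      = ‖propagator (a + b) s * (F s - F 0)‖ := by
        rw [mul_sub, hF_mul, ← norm_neg]; simp [F]
    _ ≤ ‖a * b - b * a‖ * s ^ 2 / 2 := by
        rw [CStarRing.norm_mem_unitary_mul _ (mem_unitary (ha.add hb) _)]
        exact norm_sub_le_of_norm_hasDerivAt_le_mul hF hF'_norm hs

end propagator

theorem norm_propagator_sub_trotter_le {a b : 𝒜} (ha : IsSelfAdjoint a) (hb : IsSelfAdjoint b)
    {t : ℝ} (ht : 0 ≤ t) {r : ℕ} (hr : 1 ≤ r) :
    ‖propagator (a + b) t - (propagator a (t / r) * propagator b (t / r)) ^ r‖ ≤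
      t ^ 2 * ‖a * b - b * a‖ / (2 * r) := by
  have hr₀ : (0 : ℝ) < r := by exact_mod_cast hr
  have hsplit : propagator (a + b) t = propagator (a + b) (t / r) ^ r := by
    rw [← propagator.natCast_mul, mul_div_cancel₀ _ hr₀.ne']
  calc ‖propagator (a + b) t - (propagator a (t / r) * propagator b (t / r)) ^ r‖
      ≤ r * ‖propagator (a + b) (t / r) - propagator a (t / r) * propagator b (t / r)‖ := by
        rw [hsplit]
        exact norm_pow_sub_pow_le_of_mem_unitary (propagator.mem_unitary (ha.add hb) _)
          (mul_mem (propagator.mem_unitary ha _) (propagator.mem_unitary hb _)) r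
    _ ≤ r * (‖a * b - b * a‖ * (t / r) ^ 2 / 2) := by
        gcongr
        exact propagator.norm_add_sub_mul_le ha hb (by positivity)
    _ = t ^ 2 * ‖a * b - b * a‖ / (2 * r) := by
        field_simp

end CStarAlgebra

/-- First-order Trotter product formula error bound with commutator scaling:
`‖exp(−it(A+B)) − (exp(−i(t/r)A)·exp(−i(t/r)B))^r‖ ≤ t² ‖[A,B]‖ / (2r)`. -/
theorem trotter_first_order (d : ℕ) (A B : Matrix (Fin d) (Fin d) ℂ)
    (hA : A.IsHermitian) (hB : B.IsHermitian) (t : ℝ) (ht : 0 ≤ t)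
    (r : ℕ) (hr : 1 ≤ r) :
    l2OpNorm
        (NormedSpace.exp ((-Complex.I * (t : ℂ)) • (A + B)) -
          (NormedSpace.exp ((-Complex.I * ((t / r : ℝ) : ℂ)) • A) *
            NormedSpace.exp ((-Complex.I * ((t / r : ℝ) : ℂ)) • B)) ^ r) ≤
      t ^ 2 * l2OpNorm (A * B - B * A) / (2 * r) := by
  -- Under these instances `l2OpNorm` is the norm by definition, and the topology, hence
  -- `NormedSpace.exp`, is the usual one.
  open scoped Matrix.Norms.L2Operator in
  exact norm_propagator_sub_trotter_le hA.isSelfAdjoint hB.isSelfAdjoint ht hr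
end
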